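/- Let (M,Δ) be a locally compact quantum group with C*-algebraic version (A,Δ). Let α_N : N → N⊗M be a coaction of (M,Δ) on a von Neumann algebra N and I a W*-N-module with a compatible coaction α_I : I → I⊗M. Let β_B : B → M(B⊗A) be a coaction of (A,Δ) on a C*-algebra B and E a C*-B-module with a compatible coaction β_E : E → M(E⊗A). Let π : N → L(E) be a strict *-homomorphism which is covariant, i.e. (π⊗ι)α_N(x) = β_{L(E)}(π(x)) in L(E⊗H) for all x ∈ N, where β_{L(E)} is the coaction on L(E) induced by β_E. Then there exists a unique coaction γ_F of (A,Δ) on the interior tensor product F = I ⊗_π E compatible with β_B and satisfying γ_F(v ⊗_π w)x = α_I(v) ⊗_{π⊗ι} (β_E(w)x) for all v ∈ I, w ∈ E and x ∈ B⊗K(H). -/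

import Mathlib

/-! # Common framework: concrete operator-algebraic model of locally compact quantum groups -/

noncomputable section

open scoped InnerProductSpace

/-- A bundled complex Hilbert space. -/
structure HilbSpace : Type 1 where
  carrier : Type
  [nacg : NormedAddCommGroup carrier]
  [ips : InnerProductSpace ℂ carrier]
  [complete : CompleteSpace carrier]

attribute [instance] HilbSpace.nacg HilbSpace.ips HilbSpace.complete

/-- The bounded operators on a Hilbert space. -/
abbrev Bd (H : HilbSpace) : Type := H.carrier →L[ℂ] H.carrier

/-- The bounded operators between two Hilbert spaces. -/
abbrev Bd2 (H K : HilbSpace) : Type := H.carrier →L[ℂ] K.carrier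

/-- The closed linear span of a subset of a topological vector space. -/
def cspan {V : Type*} [AddCommGroup V] [Module ℂ V] [TopologicalSpace V] (S : Set V) : Set V :=
  closure ((Submodule.span ℂ S : Submodule ℂ V) : Set V)

/-- The compact operators on a Hilbert space. -/
def compacts (H : HilbSpace) : Set (Bd H) :=
  {T : Bd H | IsCompactOperator (T : H.carrier → H.carrier)}

/-- The commutant of a set of operators. -/
def commutant {K : HilbSpace} (S : Set (Bd K)) : Set (Bd K) := Set.centralizer S

/-- The (concrete) multiplier set (idealizer) of a set of operators. -/
def multSet {K : HilbSpace} (S : Set (Bd K)) : Set (Bd K) :=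
  {T : Bd K | ∀ s ∈ S, T * s ∈ S ∧ s * T ∈ S}

/-- Membership in the strong-* closure of a set of operators. -/
def strongStarClosure {K : HilbSpace} (S : Set (Bd K)) : Set (Bd K) :=
  {x : Bd K | ∀ ε > (0 : ℝ), ∀ L : List K.carrier, ∃ s ∈ S,
      ∀ v ∈ L, ‖(x - s) v‖ < ε ∧ ‖(star x - star s) v‖ < ε}

/-- A `*`-homomorphism condition, relative to a subset of the domain. -/
def IsStarHomOn {V W : Type*} [Add V] [Mul V] [SMul ℂ V] [Star V]
    [Add W] [Mul W] [SMul ℂ W] [Star W] (f : V → W) (S : Set V) : Prop :=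
  (∀ x ∈ S, ∀ y ∈ S, f (x + y) = f x + f y) ∧
  (∀ (c : ℂ), ∀ x ∈ S, f (c • x) = c • f x) ∧
  (∀ x ∈ S, ∀ y ∈ S, f (x * y) = f x * f y) ∧
  (∀ x ∈ S, f (star x) = star (f x))

/-- A `*`-antihomomorphism condition, relative to a subset of the domain. -/
def IsStarAntiHomOn {V W : Type*} [Add V] [Mul V] [SMul ℂ V] [Star V]
    [Add W] [Mul W] [SMul ℂ W] [Star W] (f : V → W) (S : Set V) : Prop :=
  (∀ x ∈ S, ∀ y ∈ S, f (x + y) = f x + f y) ∧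
  (∀ (c : ℂ), ∀ x ∈ S, f (c • x) = c • f x) ∧
  (∀ x ∈ S, ∀ y ∈ S, f (x * y) = f y * f x) ∧
  (∀ x ∈ S, f (star x) = star (f x))

/-- A subset of `B(K)` which is a C*-algebra: a norm-closed `*`-subalgebra. -/
def IsCStarSet {K : HilbSpace} (S : Set (Bd K)) : Prop :=
  (0 : Bd K) ∈ S ∧ (∀ x ∈ S, ∀ y ∈ S, x + y ∈ S) ∧ (∀ (c : ℂ), ∀ x ∈ S, c • x ∈ S) ∧
    (∀ x ∈ S, ∀ y ∈ S, x * y ∈ S) ∧ (∀ x ∈ S, star x ∈ S) ∧ IsClosed S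

/-- Closedness of a closed subspace under multiplication and star; for a closed subspace this
is exactly the statement that it is a C*-algebra. -/
def IsMulStarClosed {K : HilbSpace} (S : Set (Bd K)) : Prop :=
  (∀ x ∈ S, ∀ y ∈ S, x * y ∈ S) ∧ (∀ x ∈ S, star x ∈ S)

/-- A non-degenerately represented concrete C*-algebra of operators. -/
structure ConcreteCStar (K : HilbSpace) where
  carrier : Set (Bd K)
  zero_mem : (0 : Bd K) ∈ carrier
  add_mem : ∀ x ∈ carrier, ∀ y ∈ carrier, x + y ∈ carrier
  smul_mem : ∀ (c : ℂ), ∀ x ∈ carrier, c • x ∈ carrier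
  mul_mem : ∀ x ∈ carrier, ∀ y ∈ carrier, x * y ∈ carrier
  star_mem : ∀ x ∈ carrier, star x ∈ carrier
  isClosed : IsClosed carrier
  nondeg : Dense ((Submodule.span ℂ {v : K.carrier | ∃ a ∈ carrier, ∃ w, a w = v} :
      Submodule ℂ K.carrier) : Set K.carrier)

/-- A realization `T` of the Hilbert space tensor product `H ⊗ K`, together with the
induced tensor product of bounded operators and the slice maps by vector functionals. -/
structure HTensor (H K T : HilbSpace) where
  tmul : H.carrier → K.carrier → T.carrier
  add_left : ∀ x x' y, tmul (x + x') y = tmul x y + tmul x' y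
  add_right : ∀ x y y', tmul x (y + y') = tmul x y + tmul x y'
  smul_left : ∀ (c : ℂ) x y, tmul (c • x) y = c • tmul x y
  smul_right : ∀ (c : ℂ) x y, tmul x (c • y) = c • tmul x y
  inner_tmul : ∀ x x' y y', ⟪tmul x y, tmul x' y'⟫_ℂ = ⟪x, x'⟫_ℂ * ⟪y, y'⟫_ℂ
  norm_tmul : ∀ x y, ‖tmul x y‖ = ‖x‖ * ‖y‖
  total : Dense ((Submodule.span ℂ (Set.range fun p : H.carrier × K.carrier => tmul p.1 p.2) :
      Submodule ℂ T.carrier) : Set T.carrier)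
  /-- The tensor product of bounded operators. -/
  opT : Bd H → Bd K → Bd T
  opT_tmul : ∀ a b x y, opT a b (tmul x y) = tmul (a x) (b y)
  /-- The right slice map `ι ⊗ ω_{ξ,η}`. -/
  sliceR : Bd T → K.carrier → K.carrier → Bd H
  sliceR_apply : ∀ S ξ η v w, ⟪w, sliceR S ξ η v⟫_ℂ = ⟪tmul w η, S (tmul v ξ)⟫_ℂ
  /-- The left slice map `ω_{ξ,η} ⊗ ι`. -/
  sliceL : Bd T → H.carrier → H.carrier → Bd K
  sliceL_apply : ∀ S ξ η v w, ⟪w, sliceL S ξ η v⟫_ℂ = ⟪tmul η w, S (tmul ξ v)⟫_ℂ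

namespace HTensor

variable {H K T : HilbSpace} (τ : HTensor H K T)

/-- `tmul` as a continuous linear map in its second variable. -/
def tmulL (x : H.carrier) : K.carrier →L[ℂ] T.carrier :=
  LinearMap.mkContinuous
    { toFun := fun y => τ.tmul x y
      map_add' := fun y y' => τ.add_right x y y'
      map_smul' := fun c y => τ.smul_right c x y }
    ‖x‖ (fun y => le_of_eq (τ.norm_tmul x y))

@[simp] lemma tmulL_apply (x : H.carrier) (y : K.carrier) : τ.tmulL x y = τ.tmul x y := rfl

/-- `tmul` as a continuous linear map in its first variable. -/
def tmulR (y : K.carrier) : H.carrier →L[ℂ] T.carrier :=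
  LinearMap.mkContinuous
    { toFun := fun x => τ.tmul x y
      map_add' := fun x x' => τ.add_left x x' y
      map_smul' := fun c x => τ.smul_left c x y }
    ‖y‖ (fun x => le_of_eq (by
      show ‖τ.tmul x y‖ = ‖y‖ * ‖x‖
      rw [τ.norm_tmul, mul_comm]))

@[simp] lemma tmulR_apply (x : H.carrier) (y : K.carrier) : τ.tmulR y x = τ.tmul x y := rfl

end HTensor

/-- The (spatial) tensor product of two concrete operator algebras, relative to a
realization of the tensor product of the underlying Hilbert spaces. -/
def ctensor {H K T : HilbSpace} (τ : HTensor H K T)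
    (S₁ : Set (Bd H)) (S₂ : Set (Bd K)) : Set (Bd T) :=
  cspan {z : Bd T | ∃ a ∈ S₁, ∃ b ∈ S₂, z = τ.opT a b}

/-! ## Multiplicative unitaries and quantum groups -/

/-- The data of a multiplicative unitary: a Hilbert space `H`, a realization `HH` of `H ⊗ H`
and a unitary `W` on it (the pentagon equation is recorded in `MUnitary` below). -/
structure MUData where
  H : HilbSpace
  HH : HilbSpace
  τ : HTensor H H HH
  flip : Bd HH
  flip_tmul : ∀ x y, flip (τ.tmul x y) = τ.tmul y x
  flip_star : star flip = flip
  flip_invol : flip * flip = 1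
  W : Bd HH
  W_unitary : W * star W = 1 ∧ star W * W = 1

namespace MUData

variable (P : MUData)

/-- The comultiplication `Δ(x) = W*(1⊗x)W`. -/
def Δ (x : Bd P.H) : Bd P.HH := star P.W * P.τ.opT 1 x * P.W

/-- The dual multiplicative unitary `Ŵ = ΣW*Σ`. -/
def What : Bd P.HH := P.flip * star P.W * P.flip

/-- The dual comultiplication `Δ̂(x) = Ŵ*(1⊗x)Ŵ`. -/
def Δhat (x : Bd P.H) : Bd P.HH := star P.What * P.τ.opT 1 x * P.What

/-- The reduced C*-algebra `A = [(ι⊗ω)(W) : ω ∈ B(H)_*]`. -/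
def Aset : Set (Bd P.H) := cspan {x : Bd P.H | ∃ ξ η, x = P.τ.sliceR P.W ξ η}

/-- The dual reduced C*-algebra `Â = [(ω⊗ι)(W) : ω ∈ B(H)_*]`. -/
def Ahatset : Set (Bd P.H) := cspan {x : Bd P.H | ∃ ξ η, x = P.τ.sliceL P.W ξ η}

/-- The von Neumann algebra `M`, as the bicommutant of `A`. -/
def Mset : Set (Bd P.H) := commutant (commutant P.Aset)

/-- The dual von Neumann algebra `M̂`. -/
def Mhatset : Set (Bd P.H) := commutant (commutant P.Ahatset)

/-- Regularity: `[C(W)] = K(H)` where `C(W) = {(ι⊗ω)(ΣW)}`. -/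
def Regular : Prop :=
  cspan {x : Bd P.H | ∃ ξ η, x = P.τ.sliceR (P.flip * P.W) ξ η} = compacts P.H

/-- The dual multiplicative unitary datum. -/
def dual : MUData where
  H := P.H
  HH := P.HH
  τ := P.τ
  flip := P.flip
  flip_tmul := P.flip_tmul
  flip_star := P.flip_star
  flip_invol := P.flip_invol
  W := P.What
  W_unitary := by
    have key : ∀ a b : Bd P.HH,
        (P.flip * a * P.flip) * (P.flip * b * P.flip) = P.flip * (a * b) * P.flip := by
      intro a b
      simp only [mul_assoc]
      congr 1
      congr 1
      rw [← mul_assoc P.flip P.flip, P.flip_invol, one_mul]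
    have hs : star (P.flip * star P.W * P.flip) = P.flip * P.W * P.flip := by
      simp only [star_mul, star_star, P.flip_star, mul_assoc]
    constructor
    · show P.flip * star P.W * P.flip * star (P.flip * star P.W * P.flip) = 1
      rw [hs, key, (P.W_unitary).2, mul_one, P.flip_invol]
    · show star (P.flip * star P.W * P.flip) * (P.flip * star P.W * P.flip) = 1
      rw [hs, key, (P.W_unitary).1, mul_one, P.flip_invol]

end MUData

/-- A multiplicative unitary: `MUData` together with the pentagon equation, expressed on a
realization of `(H ⊗ H) ⊗ H`. -/
structure MUnitary extends MUData where
  HHH : HilbSpace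
  τ12 : HTensor HH H HHH
  τ23 : HTensor H HH HHH
  τassoc : ∀ x y z, τ12.tmul (τ.tmul x y) z = τ23.tmul x (τ.tmul y z)
  pentagon :
    τ12.opT W 1 * (τ12.opT flip 1 * τ23.opT 1 W * τ12.opT flip 1) * τ23.opT 1 W
      = τ23.opT 1 W * τ12.opT W 1

/-- A (von Neumann algebraic) locally compact quantum group, presented by its left regular
multiplicative unitary together with the modular conjugations `J`, `Ĵ` of the left invariant
weights of `(M,Δ)` and `(M̂,Δ̂)`. -/
structure LCQG extends MUnitary where
  J : H.carrier → H.carrier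
  Jhat : H.carrier → H.carrier
  J_invol : ∀ v, J (J v) = v
  Jhat_invol : ∀ v, Jhat (Jhat v) = v
  J_antilinear : ∀ (c : ℂ) (v w : H.carrier), J (c • v + w) = star c • J v + J w
  Jhat_antilinear : ∀ (c : ℂ) (v w : H.carrier), Jhat (c • v + w) = star c • Jhat v + Jhat w
  J_inner : ∀ v w, ⟪J v, J w⟫_ℂ = ⟪w, v⟫_ℂ
  Jhat_inner : ∀ v w, ⟪Jhat v, Jhat w⟫_ℂ = ⟪w, v⟫_ℂ
  /-- conjugation `x ↦ J x J`. -/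
  adJ : Bd H → Bd H
  adJ_apply : ∀ x v, adJ x v = J (x (J v))
  adJ_star : ∀ x, star (adJ x) = adJ (star x)
  adJ_mul : ∀ x y, adJ (x * y) = adJ x * adJ y
  adJ_one : adJ 1 = 1
  /-- conjugation `x ↦ Ĵ x Ĵ`. -/
  adJhat : Bd H → Bd H
  adJhat_apply : ∀ x v, adJhat x v = Jhat (x (Jhat v))
  adJhat_star : ∀ x, star (adJhat x) = adJhat (star x)
  adJhat_mul : ∀ x y, adJhat (x * y) = adJhat x * adJhat y
  adJhat_one : adJhat 1 = 1
  /-- `J ⊗ J` on `H ⊗ H`. -/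
  J2 : HH.carrier → HH.carrier
  J2_tmul : ∀ v w, J2 (τ.tmul v w) = τ.tmul (J v) (J w)
  J2_invol : ∀ v, J2 (J2 v) = v
  adJ2 : Bd HH → Bd HH
  adJ2_apply : ∀ x v, adJ2 x v = J2 (x (J2 v))
  adJ2_star : ∀ x, star (adJ2 x) = adJ2 (star x)
  adJ2_mul : ∀ x y, adJ2 (x * y) = adJ2 x * adJ2 y
  adJ2_one : adJ2 1 = 1
  /-- `Ĵ ⊗ Ĵ` on `H ⊗ H`. -/
  Jhat2 : HH.carrier → HH.carrier
  Jhat2_tmul : ∀ v w, Jhat2 (τ.tmul v w) = τ.tmul (Jhat v) (Jhat w)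
  Jhat2_invol : ∀ v, Jhat2 (Jhat2 v) = v
  adJhat2 : Bd HH → Bd HH
  adJhat2_apply : ∀ x v, adJhat2 x v = Jhat2 (x (Jhat2 v))
  adJhat2_star : ∀ x, star (adJhat2 x) = adJhat2 (star x)
  adJhat2_mul : ∀ x y, adJhat2 (x * y) = adJhat2 x * adJhat2 y
  adJhat2_one : adJhat2 1 = 1

namespace LCQG

variable (G : LCQG)

abbrev MU : MUData := G.toMUData

abbrev Δ : Bd G.H → Bd G.HH := G.MU.Δ
abbrev Δhat : Bd G.H → Bd G.HH := G.MU.Δhat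
abbrev What : Bd G.HH := G.MU.What
abbrev Aset : Set (Bd G.H) := G.MU.Aset
abbrev Ahatset : Set (Bd G.H) := G.MU.Ahatset
abbrev Mset : Set (Bd G.H) := G.MU.Mset
abbrev Mhatset : Set (Bd G.H) := G.MU.Mhatset
abbrev Regular : Prop := G.MU.Regular

/-- The right regular corepresentation `V̂ = (J⊗J)W(J⊗J) ∈ M' ⊗ M̂`. -/
def Vhat : Bd G.HH := G.adJ2 G.W

/-- The right regular corepresentation `V = (Ĵ⊗Ĵ)Ŵ(Ĵ⊗Ĵ) ∈ M̂' ⊗ M`. -/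
def V : Bd G.HH := G.adJhat2 G.What

/-- The commutant quantum group datum `(JAJ, Δ')`, with multiplicative unitary
`(J⊗J)W(J⊗J)`. -/
def opMU : MUData where
  H := G.H
  HH := G.HH
  τ := G.τ
  flip := G.flip
  flip_tmul := G.flip_tmul
  flip_star := G.flip_star
  flip_invol := G.flip_invol
  W := G.adJ2 G.W
  W_unitary := by
    constructor
    · rw [G.adJ2_star, ← G.adJ2_mul, (G.W_unitary).1, G.adJ2_one]
    · rw [G.adJ2_star, ← G.adJ2_mul, (G.W_unitary).2, G.adJ2_one]

end LCQG
/-! ## Coactions on C*-algebras, crossed products, Morita equivalence -/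

/-- Strict continuity (on the unit ball of `S`) of a map into the multiplier algebra of the
operator algebra `Alg`, with respect to the strong-* topology on the domain and the strict
topology on the codomain. -/
def StrictIntoMult {K T : HilbSpace} (f : Bd K → Bd T) (S : Set (Bd K))
    (Alg : Set (Bd T)) : Prop :=
  ∀ x ∈ S, ‖x‖ ≤ 1 → ∀ ε > (0 : ℝ), ∀ L : List (Bd T), (∀ z ∈ L, z ∈ Alg) →
    ∃ δ > (0 : ℝ), ∃ Lv : List K.carrier, ∀ y ∈ S, ‖y‖ ≤ 1 →
      (∀ v ∈ Lv, ‖(x - y) v‖ < δ ∧ ‖(star x - star y) v‖ < δ) →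
      ∀ z ∈ L, ‖(f x - f y) * z‖ < ε ∧ ‖z * (f x - f y)‖ < ε

/-- A (left) coaction `β : B → M(A ⊗ B)` of the C*-algebraic quantum group determined by the
multiplicative unitary `P` on the concrete C*-algebra `B ⊆ B(K)`.  The map `app` plays the
role of the coaction together with its canonical strict extension to `M(B)`. -/
structure Coaction (P : MUData) {K : HilbSpace} (B : ConcreteCStar K) where
  HK : HilbSpace
  τK : HTensor P.H K HK
  app : Bd K → Bd HK
  app_hom : IsStarHomOn app (multSet B.carrier)
  app_mem : ∀ x ∈ multSet B.carrier, app x ∈ multSet (ctensor τK P.Aset B.carrier)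
  HHK : HilbSpace
  τ2 : HTensor P.HH K HHK
  τ2' : HTensor P.H HK HHK
  τ2assoc : ∀ x y z, τ2.tmul (P.τ.tmul x y) z = τ2'.tmul x (τK.tmul y z)
  /-- the extension `ι ⊗ app` -/
  ext : Bd HK → Bd HHK
  ext_apply : ∀ (a : Bd P.H) (x : Bd K), ext (τK.opT a x) = τ2'.opT a (app x)
  coassoc : ∀ b ∈ B.carrier,
    ext (app b) = star (τ2.opT P.W 1) * τ2'.opT 1 (app b) * τ2.opT P.W 1

namespace Coaction

variable {P : MUData} {K : HilbSpace} {B : ConcreteCStar K} (c : Coaction P B)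

/-- Continuity of the coaction: `[β(B)(A ⊗ 1)] = A ⊗ B`. -/
def IsContinuous : Prop :=
  cspan {z : Bd c.HK | ∃ b ∈ B.carrier, ∃ a ∈ P.Aset, z = c.app b * c.τK.opT a 1}
    = ctensor c.τK P.Aset B.carrier

/-- A reduced coaction: `β` is faithful. -/
def IsReduced : Prop := Set.InjOn c.app B.carrier

/-- The reduced crossed product `Â ⋉ B = [β(B)(Â ⊗ 1)]`. -/
def redCrossed : Set (Bd c.HK) :=
  cspan {z : Bd c.HK | ∃ b ∈ B.carrier, ∃ a ∈ P.Ahatset, z = c.app b * c.τK.opT a 1}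

end Coaction

/-- A (right) coaction `β : B → M(B ⊗ Â)` of the dual of the quantum group determined by `P`
on the concrete C*-algebra `B ⊆ B(K)`. -/
structure RCoaction (P : MUData) {K : HilbSpace} (B : ConcreteCStar K) where
  KH : HilbSpace
  τK : HTensor K P.H KH
  app : Bd K → Bd KH
  app_hom : IsStarHomOn app (multSet B.carrier)
  app_mem : ∀ x ∈ multSet B.carrier, app x ∈ multSet (ctensor τK B.carrier P.Ahatset)
  T2 : HilbSpace
  ρ2 : HTensor KH P.H T2
  ρ2' : HTensor K P.HH T2
  ρ2assoc : ∀ x y z, ρ2.tmul (τK.tmul x y) z = ρ2'.tmul x (P.τ.tmul y z)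
  /-- the extension `app ⊗ ι` -/
  ext : Bd KH → Bd T2
  ext_apply : ∀ (x : Bd K) (a : Bd P.H), ext (τK.opT x a) = ρ2.opT (app x) a
  coassoc : ∀ b ∈ B.carrier,
    ext (app b) = star (ρ2'.opT 1 P.What) *
      (ρ2'.opT 1 P.flip * ρ2.opT (app b) 1 * ρ2'.opT 1 P.flip) * ρ2'.opT 1 P.What

namespace RCoaction

variable {P : MUData} {K : HilbSpace} {B : ConcreteCStar K} (c : RCoaction P B)

/-- Continuity: `[β(B)(1 ⊗ Â)] = B ⊗ Â`. -/
def IsContinuous : Prop :=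
  cspan {z : Bd c.KH | ∃ b ∈ B.carrier, ∃ a ∈ P.Ahatset, z = c.app b * c.τK.opT 1 a}
    = ctensor c.τK B.carrier P.Ahatset

/-- A reduced coaction: `β` is faithful. -/
def IsReduced : Prop := Set.InjOn c.app B.carrier

/-- The fixed point algebra `M(B)^β`. -/
def fixedPoints : Set (Bd K) :=
  {z ∈ multSet B.carrier | c.app z = c.τK.opT z 1}

end RCoaction

/-- A covariant representation, on a Hilbert space, of the coaction (given by the map `app`)
of the quantum group `P` on the concrete C*-algebra `Bset ⊆ B(K)`:  a unitary corepresentation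
`X` of `(A,Δ)` together with a covariant representation `π` of `Bset`. -/
structure CovRepRaw (P : MUData) {K HK : HilbSpace} (Bset : Set (Bd K))
    (τK : HTensor P.H K HK) (app : Bd K → Bd HK) where
  L : HilbSpace
  HL : HilbSpace
  τL : HTensor P.H L HL
  X : Bd HL
  X_unitary : X * star X = 1 ∧ star X * X = 1
  U : HilbSpace
  σ1 : HTensor P.HH L U
  σ2 : HTensor P.H HL U
  σassoc : ∀ x y v, σ1.tmul (P.τ.tmul x y) v = σ2.tmul x (τL.tmul y v)
  /-- the corepresentation equation `(Δ⊗ι)(X) = X₁₃X₂₃` -/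
  corep : star (σ1.opT P.W 1) * σ2.opT 1 X * σ1.opT P.W 1
    = (σ1.opT P.flip 1 * σ2.opT 1 X * σ1.opT P.flip 1) * σ2.opT 1 X
  π : Bd K → Bd L
  π_hom : IsStarHomOn π Bset
  πExt : Bd HK → Bd HL
  πExt_apply : ∀ (a : Bd P.H) (x : Bd K), πExt (τK.opT a x) = τL.opT a (π x)
  covariant : ∀ b ∈ Bset, πExt (app b) = star X * τL.opT 1 (π b) * X

/-- A bundled C*-algebra. -/
structure CStarAlg : Type 1 where
  carrier : Type
  [nonUnitalNormedRing : NonUnitalNormedRing carrier]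
  [starRing : StarRing carrier]
  [cstarRing : CStarRing carrier]
  [normedSpace : NormedSpace ℂ carrier]
  [isScalarTower : IsScalarTower ℂ carrier carrier]
  [smulCommClass : SMulCommClass ℂ carrier carrier]
  [starModule : StarModule ℂ carrier]
  [completeSpace : CompleteSpace carrier]

attribute [instance] CStarAlg.nonUnitalNormedRing CStarAlg.starRing CStarAlg.cstarRing
  CStarAlg.normedSpace CStarAlg.isScalarTower CStarAlg.smulCommClass CStarAlg.starModule
  CStarAlg.completeSpace

/-- The full crossed product `Â^u ⋉_f B` of the coaction given by `app`, encoded through its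
universal property: representations correspond bijectively to covariant representations. -/
structure FullCrossedRaw (P : MUData) {K HK : HilbSpace} (Bset : Set (Bd K))
    (τK : HTensor P.H K HK) (app : Bd K → Bd HK) where
  F : CStarAlg
  θ : ∀ R : CovRepRaw P Bset τK app, F.carrier →⋆ₙₐ[ℂ] Bd R.L
  norm_eq : ∀ f : F.carrier, ‖f‖ = ⨆ R : CovRepRaw P Bset τK app, ‖θ R f‖
  range_eq : ∀ R : CovRepRaw P Bset τK app,
    cspan (Set.range (θ R)) =
      cspan {z : Bd R.L | ∃ b ∈ Bset, ∃ ξ η, z = R.π b * R.τL.sliceL R.X ξ η}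

/-- A unitary corepresentation of the quantum group (determined by) `P` on a Hilbert space. -/
structure CorepH (P : MUData) where
  L : HilbSpace
  HL : HilbSpace
  τL : HTensor P.H L HL
  X : Bd HL
  X_unitary : X * star X = 1 ∧ star X * X = 1
  U : HilbSpace
  σ1 : HTensor P.HH L U
  σ2 : HTensor P.H HL U
  σassoc : ∀ x y v, σ1.tmul (P.τ.tmul x y) v = σ2.tmul x (τL.tmul y v)
  corep : star (σ1.opT P.W 1) * σ2.opT 1 X * σ1.opT P.W 1
    = (σ1.opT P.flip 1 * σ2.opT 1 X * σ1.opT P.flip 1) * σ2.opT 1 X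

/-- The universal dual C*-algebra `Â^u`, encoded through its universal property:
representations correspond bijectively to unitary corepresentations of `(A,Δ)`. -/
structure UniversalDual (P : MUData) where
  Au : CStarAlg
  θ : ∀ R : CorepH P, Au.carrier →⋆ₙₐ[ℂ] Bd R.L
  norm_eq : ∀ f : Au.carrier, ‖f‖ = ⨆ R : CorepH P, ‖θ R f‖
  range_eq : ∀ R : CorepH P,
    cspan (Set.range (θ R)) = cspan {z : Bd R.L | ∃ ξ η, z = R.τL.sliceL R.X ξ η}

/-- Strong regularity of a locally compact quantum group: it is regular, and every covariant
representation of the comultiplication coaction of `(A,Δ)` on `A` factors through the compact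
operators (i.e. `Â^u ⋉_f A ≅ K(H)`). -/
def LCQG.StronglyRegular (G : LCQG) : Prop :=
  G.Regular ∧
    ∀ R : CovRepRaw G.MU G.Aset G.τ G.MU.Δ, ∃ Θ : Bd G.H → Bd R.L,
      IsStarHomOn Θ (compacts G.H) ∧
      ∀ ξ η, ∀ a ∈ G.Aset, Θ (G.τ.sliceL G.W ξ η * a) = R.τL.sliceL R.X ξ η * R.π a

/-! ## Morita equivalence -/

/-- A concrete imprimitivity bimodule between two concrete C*-algebras `S ⊆ B(K₁)` and
`T ⊆ B(K₂)`: a norm-closed subspace `V` of `B(K₂,K₁)` with `SV ⊆ V`, `VT ⊆ V`,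
`V*V` spanning `T` and `VV*` spanning `S`. -/
structure MoritaEquiv {K₁ K₂ : HilbSpace} (S : Set (Bd K₁)) (T : Set (Bd K₂)) where
  V : Set (Bd2 K₂ K₁)
  zero_mem : 0 ∈ V
  add_mem : ∀ v ∈ V, ∀ w ∈ V, v + w ∈ V
  smul_mem : ∀ (c : ℂ), ∀ v ∈ V, c • v ∈ V
  isClosed : IsClosed V
  smul_left : ∀ s ∈ S, ∀ v ∈ V, s.comp v ∈ V
  smul_right : ∀ v ∈ V, ∀ t ∈ T, v.comp t ∈ V
  inner_right : ∀ v ∈ V, ∀ w ∈ V, (ContinuousLinearMap.adjoint v).comp w ∈ T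
  inner_left : ∀ v ∈ V, ∀ w ∈ V, v.comp (ContinuousLinearMap.adjoint w) ∈ S
  full_right : cspan {z : Bd K₂ | ∃ v ∈ V, ∃ w ∈ V, z = (ContinuousLinearMap.adjoint v).comp w} = T
  full_left : cspan {z : Bd K₁ | ∃ v ∈ V, ∃ w ∈ V, z = v.comp (ContinuousLinearMap.adjoint w)} = S

/-- A covariant Morita equivalence: an imprimitivity bimodule carrying a compatible coaction
`γV`, covariant with respect to the given coactions `δS`, `δT` on the two sides. -/
structure CovariantMoritaEquiv {K₁ K₂ K₁' K₂' : HilbSpace} (S : Set (Bd K₁))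
    (T : Set (Bd K₂)) (δS : Bd K₁ → Bd K₁') (δT : Bd K₂ → Bd K₂')
    extends MoritaEquiv S T where
  γV : Bd2 K₂ K₁ → Bd2 K₂' K₁'
  γV_inner_right : ∀ v ∈ V, ∀ w ∈ V,
    (ContinuousLinearMap.adjoint (γV v)).comp (γV w) = δT ((ContinuousLinearMap.adjoint v).comp w)
  γV_inner_left : ∀ v ∈ V, ∀ w ∈ V,
    (γV v).comp (ContinuousLinearMap.adjoint (γV w)) = δS (v.comp (ContinuousLinearMap.adjoint w))
  γV_module : ∀ s ∈ S, ∀ v ∈ V, ∀ t ∈ T,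
    γV ((s.comp v).comp t) = ((δS s).comp (γV v)).comp (δT t)

/-- An abstract imprimitivity bimodule between two abstract C*-algebras. -/
structure AbsMorita (A B : CStarAlg) : Type 1 where
  E : Type
  [acg : AddCommGroup E]
  [mod : Module ℂ E]
  smulA : A.carrier → E → E
  smulB : E → B.carrier → E
  innerA : E → E → A.carrier
  innerB : E → E → B.carrier
  innerA_add : ∀ x y z, innerA (x + y) z = innerA x z + innerA y z
  innerB_add : ∀ x y z, innerB x (y + z) = innerB x y + innerB x z
  innerA_smul : ∀ a x y, innerA (smulA a x) y = a * innerA x y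
  innerB_smul : ∀ x y b, innerB x (smulB y b) = innerB x y * b
  innerA_star : ∀ x y, star (innerA x y) = innerA y x
  innerB_star : ∀ x y, star (innerB x y) = innerB y x
  compat : ∀ x y z, smulA (innerA x y) z = smulB x (innerB y z)
  fullA : Dense ((Submodule.span ℂ {a : A.carrier | ∃ x y, a = innerA x y} :
      Submodule ℂ A.carrier) : Set A.carrier)
  fullB : Dense ((Submodule.span ℂ {b : B.carrier | ∃ x y, b = innerB x y} :
      Submodule ℂ B.carrier) : Set B.carrier)

/-! ## Closed quantum subgroups -/

/-- A closed quantum subgroup `(M₁,Δ₁)` of `(M,Δ)`: a faithful normal unital `*`-homomorphism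
`π̂ : M̂₁ → M̂` compatible with the dual comultiplications, together with the associated
right coaction `α : M → M ⊗ M₁` by right translations, determined by
`(α⊗ι)(W) = W₁₃ ((ι⊗π̂)(W₁))₂₃`. -/
structure ClosedQSubgroup (G G₁ : LCQG) where
  pihat : Bd G₁.H → Bd G.H
  pihat_hom : IsStarHomOn pihat G₁.Mhatset
  pihat_one : pihat 1 = 1
  pihat_inj : Set.InjOn pihat G₁.Mhatset
  pihat_mem : ∀ x ∈ G₁.Mhatset, pihat x ∈ G.Mhatset
  /-- the extension `π̂ ⊗ π̂` -/
  pihat2 : Bd G₁.HH → Bd G.HH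
  pihat2_apply : ∀ a b, pihat2 (G₁.τ.opT a b) = G.τ.opT (pihat a) (pihat b)
  pihat_delta : ∀ x ∈ G₁.Mhatset, G.Δhat (pihat x) = pihat2 (G₁.Δhat x)
  /-- a realization of `H ⊗ H₁` -/
  HH₁ : HilbSpace
  τb : HTensor G.H G₁.H HH₁
  /-- a realization of `(H ⊗ H₁) ⊗ H` -/
  T₃ : HilbSpace
  τc : HTensor HH₁ G.H T₃
  τd : HTensor G.HH G₁.H T₃
  τcd : ∀ x y z, τd.tmul (G.τ.tmul x z) y = τc.tmul (τb.tmul x y) z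
  /-- a realization of `H₁ ⊗ H` -/
  H₁H : HilbSpace
  τf : HTensor G₁.H G.H H₁H
  τg : HTensor G.H H₁H T₃
  τcg : ∀ x y z, τg.tmul x (τf.tmul y z) = τc.tmul (τb.tmul x y) z
  /-- the extension `ι ⊗ π̂` on `B(H₁ ⊗ H₁)` -/
  pihatExt : Bd G₁.HH → Bd H₁H
  pihatExt_apply : ∀ a b, pihatExt (G₁.τ.opT a b) = τf.opT a (pihat b)
  /-- the right coaction `α : M → M ⊗ M₁` by right translations -/
  α : Bd G.H → Bd HH₁
  α_hom : IsStarHomOn α G.Mset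
  α_one : α 1 = 1
  α_mem : ∀ x ∈ G.Mset, α x ∈ commutant (commutant {z : Bd HH₁ | ∃ a ∈ G.Mset, ∃ b ∈ G₁.Mset, z = τb.opT a b})
  /-- the extension `α ⊗ ι` -/
  αExt : Bd G.HH → Bd T₃
  αExt_apply : ∀ (x : Bd G.H) (y : Bd G.H), αExt (G.τ.opT x y) = τc.opT (α x) y
  α_W : αExt G.W = τd.opT G.W 1 * τg.opT 1 (pihatExt G₁.W)

namespace ClosedQSubgroup

variable {G G₁ : LCQG} (sub : ClosedQSubgroup G G₁)

/-- The measured quantum homogeneous space `Q = M^α`. -/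
def Q : Set (Bd G.H) := {x : Bd G.H | x ∈ G.Mset ∧ sub.α x = sub.τb.opT x 1}

/-- `π̂' : M̂₁' → M̂'`, `π̂'(x) = Ĵ π̂(Ĵ₁ x Ĵ₁) Ĵ`. -/
def pihat' (x : Bd G₁.H) : Bd G.H := G.adJhat (sub.pihat (G₁.adJhat x))

/-- The W*-imprimitivity bimodule
`I = {v ∈ B(H₁,H) ∣ v x = π̂'(x) v for all x ∈ M̂₁'}`. -/
def Imod : Set (Bd2 G₁.H G.H) :=
  {v : Bd2 G₁.H G.H | ∀ x ∈ commutant G₁.Mhatset, v.comp x = (sub.pihat' x).comp v}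

end ClosedQSubgroup

/-- The defining properties of the quantum homogeneous space `D ⊆ Q`:  a strongly dense
C*-subalgebra of `Q` on which the comultiplication restricts to a continuous coaction of
`(A,Δ)`, and such that `Δ : Q → M(K(H) ⊗ D)` is a well defined strict map. -/
def IsQHS {G G₁ : LCQG} (sub : ClosedQSubgroup G G₁) (D : Set (Bd G.H)) : Prop :=
  IsCStarSet D ∧
  D ⊆ sub.Q ∧
  sub.Q ⊆ strongStarClosure D ∧
  (∀ d ∈ D, G.Δ d ∈ multSet (ctensor G.τ G.Aset D)) ∧
  cspan {z : Bd G.HH | ∃ d ∈ D, ∃ a ∈ G.Aset, z = G.Δ d * G.τ.opT a 1}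
    = ctensor G.τ G.Aset D ∧
  (∀ q ∈ sub.Q, G.Δ q ∈ multSet (ctensor G.τ (compacts G.H) D)) ∧
  StrictIntoMult G.Δ sub.Q (ctensor G.τ (compacts G.H) D)
/-! ## Concrete Hilbert C*-modules -/

/-- A concrete Hilbert C*-module over the concrete C*-algebra `B ⊆ B(KB)`, realized as a
norm-closed subspace `E ⊆ B(KB, KE)` with `E·B ⊆ E`, `E*·E ⊆ B`, acting non-degenerately. -/
structure ConcreteModule {KB : HilbSpace} (B : ConcreteCStar KB) (KE : HilbSpace) where
  carrier : Set (Bd2 KB KE)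
  zero_mem : 0 ∈ carrier
  add_mem : ∀ v ∈ carrier, ∀ w ∈ carrier, v + w ∈ carrier
  smul_mem : ∀ (c : ℂ), ∀ v ∈ carrier, c • v ∈ carrier
  isClosed : IsClosed carrier
  smulB_mem : ∀ v ∈ carrier, ∀ b ∈ B.carrier, v.comp b ∈ carrier
  inner_mem : ∀ v ∈ carrier, ∀ w ∈ carrier, (ContinuousLinearMap.adjoint v).comp w ∈ B.carrier
  nondeg : Dense ((Submodule.span ℂ {ξ : KE.carrier | ∃ v ∈ carrier, ∃ η, v η = ξ} :
      Submodule ℂ KE.carrier) : Set KE.carrier)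

/-- The adjointable operators `L(E)` of a concrete module (given by its carrier set),
realized concretely. -/
def modOps {KB KE : HilbSpace} (Eset : Set (Bd2 KB KE)) : Set (Bd KE) :=
  {T : Bd KE | (∀ v ∈ Eset, T.comp v ∈ Eset) ∧ ∀ v ∈ Eset, (star T).comp v ∈ Eset}

/-- Strict continuity, on the unit ball of `S ⊆ B(K)`, of a map into the adjointable
operators of the concrete module with carrier `Eset` (strong-* to strict continuity). -/
def StrictIntoOps {K KB KE : HilbSpace} (f : Bd K → Bd KE) (S : Set (Bd K))
    (Eset : Set (Bd2 KB KE)) : Prop :=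
  ∀ x ∈ S, ‖x‖ ≤ 1 → ∀ ε > (0 : ℝ), ∀ L : List (Bd2 KB KE), (∀ v ∈ L, v ∈ Eset) →
    ∃ δ > (0 : ℝ), ∃ Lv : List K.carrier, ∀ y ∈ S, ‖y‖ ≤ 1 →
      (∀ u ∈ Lv, ‖(x - y) u‖ < δ ∧ ‖(star x - star y) u‖ < δ) →
      ∀ v ∈ L, ‖(f x - f y).comp v‖ < ε ∧ ‖(star (f x) - star (f y)).comp v‖ < ε

/-- The concrete module `H ⊗ E` (a Hilbert space tensor a module), inside `B(KB, T)`,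
where `τ` realizes `T = H ⊗ KE`. -/
def htensorModule {H KB KE T : HilbSpace} (τ : HTensor H KE T)
    (Eset : Set (Bd2 KB KE)) : Set (Bd2 KB T) :=
  cspan {z : Bd2 KB T | ∃ h, ∃ v ∈ Eset, z = (τ.tmulL h).comp v}

/-- The concrete module `E ⊗ H` (a module tensor a Hilbert space), inside `B(KB, T)`,
where `τ` realizes `T = KE ⊗ H`. -/
def extTensorH {H KB KE T : HilbSpace} (τ : HTensor KE H T)
    (Eset : Set (Bd2 KB KE)) : Set (Bd2 KB T) :=
  cspan {z : Bd2 KB T | ∃ v ∈ Eset, ∃ h, z = (τ.tmulR h).comp v}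

/-- A unitary corepresentation of the quantum group determined by `P` on the concrete
C*-`B`-module with carrier `Eset`: a unitary `X` in `L(H ⊗ E)` (multiplier refinements
understood) satisfying `(Δ ⊗ ι)(X) = X₁₃ X₂₃`. -/
structure CorepMod (P : MUData) {KB KE : HilbSpace} (Eset : Set (Bd2 KB KE)) where
  T : HilbSpace
  τE : HTensor P.H KE T
  U : HilbSpace
  σ1 : HTensor P.HH KE U
  σ2 : HTensor P.H T U
  σassoc : ∀ x y v, σ1.tmul (P.τ.tmul x y) v = σ2.tmul x (τE.tmul y v)
  X : Bd T
  X_unitary : X * star X = 1 ∧ star X * X = 1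
  X_adjointable : X ∈ modOps (htensorModule τE Eset)
  corep : star (σ1.opT P.W 1) * σ2.opT 1 X * σ1.opT P.W 1
    = (σ1.opT P.flip 1 * σ2.opT 1 X * σ1.opT P.flip 1) * σ2.opT 1 X

/-- An isomorphism of concrete Hilbert C*-modules: a bijection preserving the linear
structure, the right module action and the inner products. -/
def IsModuleIso {KB KE KF : HilbSpace}
    (Eset : Set (Bd2 KB KE)) (Fset : Set (Bd2 KB KF)) (B' : ConcreteCStar KB)
    (φ : Bd2 KB KE → Bd2 KB KF) : Prop :=
  Set.BijOn φ Eset Fset ∧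
  (∀ v ∈ Eset, ∀ w ∈ Eset, φ (v + w) = φ v + φ w) ∧
  (∀ (c : ℂ), ∀ v ∈ Eset, φ (c • v) = c • φ v) ∧
  (∀ v ∈ Eset, ∀ b ∈ B'.carrier, φ (v.comp b) = (φ v).comp b) ∧
  (∀ v ∈ Eset, ∀ w ∈ Eset,
    (ContinuousLinearMap.adjoint (φ v)).comp (φ w) = (ContinuousLinearMap.adjoint v).comp w)
/-! ## Right coactions of `(A,Δ)` on C*-algebras -/

/-- A (right) coaction `β : B → M(B ⊗ A)` of the C*-algebraic quantum group determined by
`P` on the concrete C*-algebra `B ⊆ B(K)`. -/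
structure RACoaction (P : MUData) {K : HilbSpace} (B : ConcreteCStar K) where
  KH : HilbSpace
  τK : HTensor K P.H KH
  app : Bd K → Bd KH
  app_hom : IsStarHomOn app (multSet B.carrier)
  app_mem : ∀ x ∈ multSet B.carrier, app x ∈ multSet (ctensor τK B.carrier P.Aset)
  T2 : HilbSpace
  ρ2 : HTensor KH P.H T2
  ρ2' : HTensor K P.HH T2
  ρ2assoc : ∀ x y z, ρ2.tmul (τK.tmul x y) z = ρ2'.tmul x (P.τ.tmul y z)
  /-- the extension `app ⊗ ι` -/
  ext : Bd KH → Bd T2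
  ext_apply : ∀ (x : Bd K) (a : Bd P.H), ext (τK.opT x a) = ρ2.opT (app x) a
  coassoc : ∀ b ∈ B.carrier,
    ext (app b) = star (ρ2'.opT 1 P.W) *
      (ρ2'.opT 1 P.flip * ρ2.opT (app b) 1 * ρ2'.opT 1 P.flip) * ρ2'.opT 1 P.W

namespace RACoaction

variable {P : MUData} {K : HilbSpace} {B : ConcreteCStar K} (c : RACoaction P B)

/-- The map `ι ⊗ Δ` on `B(K ⊗ H)`. -/
def iDelta : Bd c.KH → Bd c.T2 :=
  fun z => star (c.ρ2'.opT 1 P.W) *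
    (c.ρ2'.opT 1 P.flip * c.ρ2.opT z 1 * c.ρ2'.opT 1 P.flip) * c.ρ2'.opT 1 P.W

end RACoaction
/-! ## Auxiliary lemmas for Statement 18 -/

section AuxStatement18

set_option maxHeartbeats 1000000 in
set_option synthInstance.maxHeartbeats 1000000 in
lemma aux_contract {E F : Type*} [NormedAddCommGroup E] [InnerProductSpace ℂ E] [CompleteSpace E]
    [NormedAddCommGroup F] [InnerProductSpace ℂ F] [CompleteSpace F]
    (S : Set (E →L[ℂ] E)) (h0 : (0 : E →L[ℂ] E) ∈ S)
    (hadd : ∀ x ∈ S, ∀ y ∈ S, x + y ∈ S)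
    (hsmul : ∀ (c : ℂ), ∀ x ∈ S, c • x ∈ S)
    (hmul : ∀ x ∈ S, ∀ y ∈ S, x * y ∈ S)
    (hstar : ∀ x ∈ S, star x ∈ S)
    (hcl : IsClosed S)
    (f : (E →L[ℂ] E) → (F →L[ℂ] F))
    (hfadd : ∀ x ∈ S, ∀ y ∈ S, f (x + y) = f x + f y)
    (hfsmul : ∀ (c : ℂ), ∀ x ∈ S, f (c • x) = c • f x)
    (hfmul : ∀ x ∈ S, ∀ y ∈ S, f (x * y) = f x * f y)
    (hfstar : ∀ x ∈ S, f (star x) = star (f x)) :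
    ∀ b ∈ S, ‖f b‖ ≤ ‖b‖ := by
  intro b hb
  let Bsub : NonUnitalStarSubalgebra ℂ (E →L[ℂ] E) :=
    { carrier := S
      add_mem' := fun hx hy => hadd _ hx _ hy
      zero_mem' := h0
      mul_mem' := fun hx hy => hmul _ hx _ hy
      smul_mem' := fun c x hx => hsmul c x hx
      star_mem' := fun hx => hstar _ hx }
  haveI : IsClosed (Bsub : Set (E →L[ℂ] E)) := hcl
  let φ : Bsub →⋆ₙₐ[ℂ] (F →L[ℂ] F) :=
    { toFun := fun x => f ↑x
      map_smul' := fun c x => hfsmul c ↑x x.2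
      map_zero' := by
        have := hfsmul 0 0 h0
        simpa using this
      map_add' := fun x y => hfadd ↑x x.2 ↑y y.2
      map_mul' := fun x y => hfmul ↑x x.2 ↑y y.2
      map_star' := fun x => hfstar ↑x x.2 }
  have := NonUnitalStarAlgHom.norm_apply_le φ (⟨b, hb⟩ : Bsub)
  exact this

/-- An operator `A` with `A† A = 0` is zero. -/
lemma aux_eq_of_adjoint_comp {E F : Type*} [NormedAddCommGroup E] [InnerProductSpace ℂ E]
    [CompleteSpace E] [NormedAddCommGroup F] [InnerProductSpace ℂ F] [CompleteSpace F]
    (A : E →L[ℂ] F) (h : (ContinuousLinearMap.adjoint A).comp A = 0) : A = 0 := by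
  have h4 := ContinuousLinearMap.norm_adjoint_comp_self A
  rw [show ContinuousLinearMap.adjoint A ∘L A = 0 from h, norm_zero] at h4
  have : ‖A‖ = 0 := by nlinarith [norm_nonneg A]
  simpa [norm_eq_zero] using this

/-- Rank-one operators are compact. -/
lemma aux_rankone_compact {H : HilbSpace} (f : H.carrier →L[ℂ] ℂ) (h : H.carrier) :
    f.smulRight h ∈ compacts H := by
  refine ⟨(fun c : ℂ => c • h) '' Metric.closedBall 0 ‖f‖, ?_, ?_⟩
  · exact (isCompact_closedBall (0 : ℂ) ‖f‖).image (by fun_prop)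
  · refine Filter.mem_of_superset (Metric.closedBall_mem_nhds (0 : H.carrier) one_pos) ?_
    intro x hx
    refine ⟨f x, ?_, rfl⟩
    simp only [Metric.mem_closedBall, dist_zero_right] at hx ⊢
    calc ‖f x‖ ≤ ‖f‖ * ‖x‖ := f.le_opNorm x
    _ ≤ ‖f‖ * 1 := by nlinarith [norm_nonneg f]
    _ = ‖f‖ := mul_one _

/-- Non-degeneracy: an operator on a Hilbert tensor product vanishing against
`B ⊗ K(H)` is zero. -/
lemma aux_vanish {K H T C : HilbSpace} (τ : HTensor K H T) (B : ConcreteCStar K)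
    (y : Bd2 T C)
    (hy : ∀ b ∈ B.carrier, ∀ k ∈ compacts H, y.comp (τ.opT b k) = 0) : y = 0 := by
  have happ : ∀ b ∈ B.carrier, ∀ k ∈ compacts H, ∀ u, y ((τ.opT b k) u) = 0 := by
    intro b hb k hk u
    have h2 : y.comp (τ.opT b k) u = (0 : Bd2 T C) u := by rw [hy b hb k hk]
    simpa using h2
  have hmem : ∀ (ξ : K.carrier) (h : H.carrier), y (τ.tmul ξ h) = 0 := by
    intro ξ h
    by_cases hh : h = (0 : H.carrier)
    · have h0 : τ.tmul ξ h = 0 := by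
        have h1 := τ.smul_right 0 ξ 0
        rw [hh]
        simpa using h1
      rw [h0, map_zero]
    · set R : Bd H := ((⟪h, h⟫_ℂ)⁻¹ • innerSL ℂ h).smulRight h with hR
      have hRc : R ∈ compacts H := aux_rankone_compact _ h
      have hRh : R h = h := by
        rw [hR]
        simp only [ContinuousLinearMap.smulRight_apply, ContinuousLinearMap.smul_apply,
          innerSL_apply_apply, smul_eq_mul]
        rw [inv_mul_cancel₀ (inner_self_ne_zero.mpr hh), one_smul]
      have hker : ∀ v ∈ {v : K.carrier | ∃ a ∈ B.carrier, ∃ w, a w = v},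
          v ∈ (y.comp (τ.tmulR h)).ker := by
        intro v hv
        obtain ⟨a, ha, w, hw⟩ := hv
        have key : (τ.tmulR h) v = (τ.opT a R) (τ.tmul w h) := by
          rw [τ.opT_tmul a R w h, hRh, hw, τ.tmulR_apply]
        simp only [LinearMap.mem_ker, ContinuousLinearMap.coe_coe, ContinuousLinearMap.coe_comp', Function.comp_apply]
        rw [key]
        exact happ a ha R hRc _
      have hspan : Submodule.span ℂ {v : K.carrier | ∃ a ∈ B.carrier, ∃ w, a w = v}
          ≤ (y.comp (τ.tmulR h)).ker := Submodule.span_le.mpr hker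
      have hξ : ξ ∈ (y.comp (τ.tmulR h)).ker := by
        have h1 : ξ ∈ closure
            ((Submodule.span ℂ {v : K.carrier | ∃ a ∈ B.carrier, ∃ w, a w = v} :
              Submodule ℂ K.carrier) : Set K.carrier) := by
          rw [B.nondeg.closure_eq]; trivial
        have h2 := closure_mono (show
            ((Submodule.span ℂ {v : K.carrier | ∃ a ∈ B.carrier, ∃ w, a w = v} :
              Submodule ℂ K.carrier) : Set K.carrier) ⊆
            ((y.comp (τ.tmulR h)).ker : Set K.carrier) from hspan) h1
        rwa [(ContinuousLinearMap.isClosed_ker _).closure_eq] at h2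
      have h3 : y ((τ.tmulR h) ξ) = 0 := hξ
      rwa [τ.tmulR_apply] at h3
  have hsub : Submodule.span ℂ (Set.range fun p : K.carrier × H.carrier => τ.tmul p.1 p.2)
      ≤ y.ker := by
    rw [Submodule.span_le]
    rintro v ⟨p, rfl⟩
    exact hmem p.1 p.2
  ext v
  have h1 : v ∈ closure
      ((Submodule.span ℂ (Set.range fun p : K.carrier × H.carrier => τ.tmul p.1 p.2) :
        Submodule ℂ T.carrier) : Set T.carrier) := by
    rw [τ.total.closure_eq]; trivial
  have h2 := closure_mono (show
      ((Submodule.span ℂ (Set.range fun p : K.carrier × H.carrier => τ.tmul p.1 p.2) :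
        Submodule ℂ T.carrier) : Set T.carrier) ⊆ (y.ker : Set T.carrier) from hsub) h1
  rw [(ContinuousLinearMap.isClosed_ker y).closure_eq] at h2
  simpa using (h2 : v ∈ y.ker)
/-! ## Auxiliary: finite combinations -/

/-- The value of a formal finite linear combination. -/
def auxSum {α X : Type*} [AddCommMonoid X] [SMul ℂ X] (g : α → X) (l : List (ℂ × α)) : X :=
  (l.map fun t => t.1 • g t.2).sum

lemma auxSum_nil {α X : Type*} [AddCommMonoid X] [SMul ℂ X] (g : α → X) :
    auxSum g ([] : List (ℂ × α)) = 0 := rfl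

lemma auxSum_cons {α X : Type*} [AddCommMonoid X] [SMul ℂ X] (g : α → X)
    (t : ℂ × α) (l : List (ℂ × α)) :
    auxSum g (t :: l) = t.1 • g t.2 + auxSum g l := by simp [auxSum]

lemma auxSum_append {α X : Type*} [AddCommMonoid X] [SMul ℂ X] (g : α → X)
    (l l' : List (ℂ × α)) :
    auxSum g (l ++ l') = auxSum g l + auxSum g l' := by simp [auxSum]

lemma auxSum_smul {α X : Type*} [AddCommMonoid X] [Module ℂ X] (g : α → X)
    (c : ℂ) (l : List (ℂ × α)) :
    auxSum g (l.map fun t => (c * t.1, t.2)) = c • auxSum g l := by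
  induction l with
  | nil => simp [auxSum]
  | cons t l ih =>
    simp only [List.map_cons, auxSum_cons] at *
    rw [ih, mul_smul, smul_add]

/-- Formal representations of elements of the algebraic interior tensor product
together with their image. -/
def auxRep {α X Y : Type*} [AddCommMonoid X] [SMul ℂ X] [AddCommMonoid Y] [SMul ℂ Y]
    (P : α → Prop) (g : α → X) (q : α → Y) (z : X) (y : Y) : Prop :=
  ∃ l : List (ℂ × α), (∀ t ∈ l, P t.2) ∧ z = auxSum g l ∧ y = auxSum q l

section auxRep

variable {α X Y : Type*} [AddCommMonoid X] [Module ℂ X] [AddCommMonoid Y] [Module ℂ Y]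
  (P : α → Prop) (g : α → X) (q : α → Y)

lemma auxRep_zero : auxRep P g q 0 0 := ⟨[], by simp, rfl, rfl⟩

lemma auxRep_single (t : α) (ht : P t) : auxRep P g q (g t) (q t) :=
  ⟨[(1, t)], by simpa using ht, by simp [auxSum_cons, auxSum_nil], by
    simp [auxSum_cons, auxSum_nil]⟩

lemma auxRep_add {z z' y y'} (h : auxRep P g q z y) (h' : auxRep P g q z' y') :
    auxRep P g q (z + z') (y + y') := by
  obtain ⟨l, hl, hz, hy⟩ := h
  obtain ⟨l', hl', hz', hy'⟩ := h'
  exact ⟨l ++ l', by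
    intro t ht
    rcases List.mem_append.mp ht with h | h
    exacts [hl t h, hl' t h], by rw [hz, hz', auxSum_append], by rw [hy, hy', auxSum_append]⟩

lemma auxRep_smul {z y} (c : ℂ) (h : auxRep P g q z y) :
    auxRep P g q (c • z) (c • y) := by
  obtain ⟨l, hl, hz, hy⟩ := h
  refine ⟨l.map fun t => (c * t.1, t.2), ?_, ?_, ?_⟩
  · intro t ht
    obtain ⟨s, hs, rfl⟩ := List.mem_map.mp ht
    exact hl s hs
  · rw [hz, auxSum_smul]
  · rw [hy, auxSum_smul]

lemma auxRep_map {α₂ X₂ Y₂ : Type*} [AddCommMonoid X₂] [Module ℂ X₂]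
    [AddCommMonoid Y₂] [Module ℂ Y₂]
    (P₂ : α₂ → Prop) (g₂ : α₂ → X₂) (q₂ : α₂ → Y₂) (m : α → α₂)
    (TX : X → X₂) (TY : Y → Y₂)
    (hTXadd : ∀ a b, TX (a + b) = TX a + TX b)
    (hTXsmul : ∀ (c : ℂ) a, TX (c • a) = c • TX a)
    (hTX0 : TX 0 = 0)
    (hTYadd : ∀ a b, TY (a + b) = TY a + TY b)
    (hTYsmul : ∀ (c : ℂ) a, TY (c • a) = c • TY a)
    (hTY0 : TY 0 = 0)
    (hm : ∀ t, P t → P₂ (m t) ∧ g₂ (m t) = TX (g t) ∧ q₂ (m t) = TY (q t))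
    {z y} (h : auxRep P g q z y) : auxRep P₂ g₂ q₂ (TX z) (TY y) := by
  obtain ⟨l, hl, hz, hy⟩ := h
  refine ⟨l.map fun t => (t.1, m t.2), ?_, ?_, ?_⟩
  · intro t ht
    obtain ⟨s, hs, rfl⟩ := List.mem_map.mp ht
    exact (hm s.2 (hl s hs)).1
  · rw [hz]; clear hz hy
    induction l with
    | nil => simpa [auxSum_nil] using hTX0
    | cons t l ih =>
      simp only [List.map_cons, auxSum_cons, hTXadd, hTXsmul]
      rw [(hm t.2 (hl t (by simp))).2.1, ih (fun s hs => hl s (List.mem_cons_of_mem _ hs))]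
  · rw [hy]; clear hz hy
    induction l with
    | nil => simpa [auxSum_nil] using hTY0
    | cons t l ih =>
      simp only [List.map_cons, auxSum_cons, hTYadd, hTYsmul]
      rw [(hm t.2 (hl t (by simp))).2.2, ih (fun s hs => hl s (List.mem_cons_of_mem _ hs))]

end auxRep

/-- One-sided expansion of a (semi)linear identity over formal combinations. -/
lemma aux_onesided {α X Y BB CC : Type*}
    [AddCommMonoid X] [Module ℂ X] [AddCommMonoid Y] [Module ℂ Y]
    [AddCommMonoid BB] [Module ℂ BB] [AddCommMonoid CC] [Module ℂ CC]
    (P : α → Prop) (g : α → X) (q : α → Y) (σ : ℂ → ℂ)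
    (L1 : Y → CC) (L2 : X → BB) (app : BB → CC) (Bsub : Set BB)
    (hL1add : ∀ a b, L1 (a + b) = L1 a + L1 b)
    (hL1smul : ∀ (c : ℂ) a, L1 (c • a) = σ c • L1 a)
    (hL10 : L1 0 = 0)
    (hL2add : ∀ a b, L2 (a + b) = L2 a + L2 b)
    (hL2smul : ∀ (c : ℂ) a, L2 (c • a) = σ c • L2 a)
    (hL20 : L2 0 = 0)
    (hB0 : (0 : BB) ∈ Bsub)
    (hBadd : ∀ x ∈ Bsub, ∀ y ∈ Bsub, x + y ∈ Bsub)
    (hBsmul : ∀ (c : ℂ), ∀ x ∈ Bsub, c • x ∈ Bsub)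
    (happ0 : app 0 = 0)
    (happadd : ∀ x ∈ Bsub, ∀ y ∈ Bsub, app (x + y) = app x + app y)
    (happsmul : ∀ (c : ℂ), ∀ x ∈ Bsub, app (c • x) = c • app x)
    (hkey : ∀ t, P t → L1 (q t) = app (L2 (g t)) ∧ L2 (g t) ∈ Bsub) :
    ∀ l : List (ℂ × α), (∀ t ∈ l, P t.2) →
      L1 (auxSum q l) = app (L2 (auxSum g l)) ∧ L2 (auxSum g l) ∈ Bsub := by
  intro l
  induction l with
  | nil =>
    intro _
    rw [auxSum_nil, auxSum_nil, hL10, hL20, happ0]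
    exact ⟨rfl, hB0⟩
  | cons t l ih =>
    intro hl
    obtain ⟨ih1, ih2⟩ := ih fun s hs => hl s (List.mem_cons_of_mem _ hs)
    have ht := hl t (by simp)
    obtain ⟨hk1, hk2⟩ := hkey t.2 ht
    have hmem : σ t.1 • L2 (g t.2) ∈ Bsub := hBsmul _ _ hk2
    constructor
    · rw [auxSum_cons, auxSum_cons, hL1add, hL1smul, hL2add, hL2smul,
        happadd _ hmem _ ih2, happsmul _ _ hk2, hk1, ih1]
    · rw [auxSum_cons, hL2add, hL2smul]
      exact hBadd _ hmem _ ih2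

/-- Two-sided (sesquilinear) expansion over formal combinations. -/
lemma aux_bilinear {α X Y BB CC : Type*}
    [AddCommMonoid X] [Module ℂ X] [AddCommMonoid Y] [Module ℂ Y]
    [AddCommMonoid BB] [Module ℂ BB] [AddCommMonoid CC] [Module ℂ CC]
    (P : α → Prop) (g : α → X) (q : α → Y)
    (innX : X → X → BB) (innY : Y → Y → CC) (app : BB → CC) (Bsub : Set BB)
    (hXadd_l : ∀ a a' b, innX (a + a') b = innX a b + innX a' b)
    (hXadd_r : ∀ a b b', innX a (b + b') = innX a b + innX a b')
    (hXsmul_l : ∀ (c : ℂ) a b, innX (c • a) b = (starRingEnd ℂ) c • innX a b)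
    (hXsmul_r : ∀ (c : ℂ) a b, innX a (c • b) = c • innX a b)
    (hYadd_l : ∀ a a' b, innY (a + a') b = innY a b + innY a' b)
    (hYadd_r : ∀ a b b', innY a (b + b') = innY a b + innY a b')
    (hYsmul_l : ∀ (c : ℂ) a b, innY (c • a) b = (starRingEnd ℂ) c • innY a b)
    (hYsmul_r : ∀ (c : ℂ) a b, innY a (c • b) = c • innY a b)
    (hB0 : (0 : BB) ∈ Bsub)
    (hBadd : ∀ x ∈ Bsub, ∀ y ∈ Bsub, x + y ∈ Bsub)
    (hBsmul : ∀ (c : ℂ), ∀ x ∈ Bsub, c • x ∈ Bsub)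
    (happ0 : app 0 = 0)
    (happadd : ∀ x ∈ Bsub, ∀ y ∈ Bsub, app (x + y) = app x + app y)
    (happsmul : ∀ (c : ℂ), ∀ x ∈ Bsub, app (c • x) = c • app x)
    (hkey : ∀ t t', P t → P t' →
      innY (q t) (q t') = app (innX (g t) (g t')) ∧ innX (g t) (g t') ∈ Bsub) :
    ∀ l l' : List (ℂ × α), (∀ t ∈ l, P t.2) → (∀ t ∈ l', P t.2) →
      innY (auxSum q l) (auxSum q l') = app (innX (auxSum g l) (auxSum g l')) ∧
        innX (auxSum g l) (auxSum g l') ∈ Bsub := by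
  intro l l' hl hl'
  have hX0r : ∀ x, innX x 0 = 0 := fun x => by
    have := hXsmul_r 0 x 0; simpa using this
  have hY0r : ∀ y, innY y 0 = 0 := fun y => by
    have := hYsmul_r 0 y 0; simpa using this
  have hX0l : innX 0 (auxSum g l') = 0 := by
    have := hXsmul_l 0 0 (auxSum g l'); simpa using this
  have hY0l : innY 0 (auxSum q l') = 0 := by
    have := hYsmul_l 0 0 (auxSum q l'); simpa using this
  have step1 : ∀ t, P t →
      innY (q t) (auxSum q l') = app (innX (g t) (auxSum g l')) ∧
        innX (g t) (auxSum g l') ∈ Bsub := by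
    intro t ht
    exact aux_onesided P g q (fun c => c) (fun yy => innY (q t) yy) (fun xx => innX (g t) xx)
      app Bsub (fun a b => hYadd_r _ a b) (fun c a => hYsmul_r c _ a) (hY0r _)
      (fun a b => hXadd_r _ a b) (fun c a => hXsmul_r c _ a) (hX0r _)
      hB0 hBadd hBsmul happ0 happadd happsmul
      (fun t' ht' => hkey t t' ht ht') l' hl'
  exact aux_onesided P g q (fun c => (starRingEnd ℂ) c)
    (fun yy => innY yy (auxSum q l')) (fun xx => innX xx (auxSum g l')) app Bsub
    (fun a b => hYadd_l a b _) (fun c a => hYsmul_l c a _) hY0l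
    (fun a b => hXadd_l a b _) (fun c a => hXsmul_l c a _) hX0l
    hB0 hBadd hBsmul happ0 happadd happsmul step1 l hl
end AuxStatement18

/-- A vector with norm bounded by `ε * C` for all small `ε` is zero. -/
lemma aux_norm_le_zero {V : Type*} [NormedAddCommGroup V] (x : V) (C : ℝ)
    (h : ∀ ε : ℝ, 0 < ε → ε ≤ 1 → ‖x‖ ≤ ε * C) : x = 0 := by
  have hC : 0 ≤ C := by have h1 := h 1 one_pos le_rfl; nlinarith [norm_nonneg x]
  rw [← norm_le_zero_iff]
  by_contra hpos
  push_neg at hpos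
  have hε0 : 0 < min 1 (‖x‖ / (2 * (C + 1))) := lt_min one_pos (by positivity)
  have h2 := h _ hε0 (min_le_left _ _)
  have h3 : min 1 (‖x‖ / (2 * (C + 1))) ≤ ‖x‖ / (2 * (C + 1)) := min_le_right _ _
  have hne : (2 * (C + 1)) ≠ 0 := by positivity
  have h4 : (‖x‖ / (2 * (C + 1))) * (2 * (C + 1)) = ‖x‖ := div_mul_cancel₀ _ hne
  have h5 : ‖x‖ ≤ (‖x‖ / (2 * (C + 1))) * C :=
    h2.trans (mul_le_mul_of_nonneg_right h3 hC)
  have ht : 0 < ‖x‖ / (2 * (C + 1)) := by positivity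
  nlinarith



set_option maxHeartbeats 1600000

/-! ## Statement 18 -/

section Statement18

open ContinuousLinearMap in
/-- Let `α_N` be a coaction of `(M,Δ)` on a von Neumann algebra `N`,
`I` a W*-`N`-module with compatible coaction `α_I`, `β_B` a coaction of `(A,Δ)` on `B`,
`E` a C*-`B`-module with compatible coaction `β_E`, and `π : N → L(E)` a strict covariant
`*`-homomorphism.  Then there is a unique coaction `γ_F` of `(A,Δ)` on the interior tensor
product `F = I ⊗_π E`, compatible with `β_B`, satisfying
`γ_F(v ⊗_π w) x = α_I(v) ⊗_{π⊗ι} (β_E(w) x)` for all `v ∈ I`, `w ∈ E`, `x ∈ B ⊗ K(H)`. -/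
theorem statement_18
    (P : MUnitary)
    -- the von Neumann algebra `N` and the coaction `α_N : N → N ⊗ M`
    {KN : HilbSpace} (N : Set (Bd KN))
    (hN_star : ∀ x ∈ N, star x ∈ N) (hN_one : (1 : Bd KN) ∈ N)
    (hN_vonNeumann : commutant (commutant N) = N)
    (KNH : HilbSpace) (τN : HTensor KN P.H KNH)
    (αN : Bd KN → Bd KNH)
    (hαN_hom : IsStarHomOn αN N)
    (hαN_inj : Set.InjOn αN N)
    (hαN_mem : ∀ x ∈ N,
      αN x ∈ commutant (commutant
        {z : Bd KNH | ∃ n ∈ N, ∃ m ∈ P.toMUData.Mset, z = τN.opT n m}))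
    -- the W*-`N`-module `I` with its compatible coaction `α_I`
    {KI : HilbSpace} (I : Set (Bd2 KN KI))
    (hI_add : ∀ v ∈ I, ∀ w ∈ I, v + w ∈ I)
    (hI_smul : ∀ (c : ℂ), ∀ v ∈ I, c • v ∈ I)
    (hI_mod : ∀ v ∈ I, ∀ n ∈ N, v.comp n ∈ I)
    (hI_inner : ∀ v ∈ I, ∀ w ∈ I, (adjoint v).comp w ∈ N)
    (KIH : HilbSpace) (τI : HTensor KI P.H KIH)
    (αI : Bd2 KN KI → Bd2 KNH KIH)
    (hαI_inner : ∀ v ∈ I, ∀ w ∈ I,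
      (adjoint (αI v)).comp (αI w) = αN ((adjoint v).comp w))
    (hαI_mod : ∀ v ∈ I, ∀ n ∈ N, αI (v.comp n) = (αI v).comp (αN n))
    -- the C*-algebra `B` with coaction `β_B` and the C*-`B`-module `E` with coaction `β_E`
    {KB : HilbSpace} (B : ConcreteCStar KB) (β : RACoaction P.toMUData B)
    {KE : HilbSpace} (E : ConcreteModule B KE)
    (KEH : HilbSpace) (τE2 : HTensor KE P.H KEH)
    (βE : Bd2 KB KE → Bd2 β.KH KEH)
    (hβE_mod : ∀ v ∈ E.carrier, ∀ b ∈ B.carrier, βE (v.comp b) = (βE v).comp (β.app b))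
    (hβE_inner : ∀ v ∈ E.carrier, ∀ w ∈ E.carrier,
      (adjoint (βE v)).comp (βE w) = β.app ((adjoint v).comp w))
    -- the strict covariant `*`-homomorphism `π : N → L(E)`
    (π : Bd KN → Bd KE)
    (hπ_hom : IsStarHomOn π N) (hπ_one : π 1 = 1)
    (hπ_ops : ∀ x ∈ N, π x ∈ modOps E.carrier)
    (hπ_strict : StrictIntoOps π N E.carrier)
    (πExt : Bd KNH → Bd KEH)
    (hπExt : ∀ (n : Bd KN) (S : Bd P.H), πExt (τN.opT n S) = τE2.opT (π n) S)
    (bLE : Bd KE → Bd KEH)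
    (hbLE : ∀ (T : Bd KE), ∀ v ∈ E.carrier, ∀ x : Bd β.KH,
      (bLE T).comp ((βE v).comp x) = (βE (T.comp v)).comp x)
    (hcovariant : ∀ x ∈ N, πExt (αN x) = bLE (π x))
    -- the interior tensor product `F = I ⊗_π E`
    {KF : HilbSpace} (F : ConcreteModule B KF)
    (pF : Bd2 KN KI → Bd2 KB KE → Bd2 KB KF)
    (hpF_inner : ∀ v ∈ I, ∀ v' ∈ I, ∀ w ∈ E.carrier, ∀ w' ∈ E.carrier,
      (adjoint (pF v w)).comp (pF v' w')
        = (adjoint w).comp ((π ((adjoint v).comp v')).comp w'))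
    (hpF_mem : ∀ v ∈ I, ∀ w ∈ E.carrier, pF v w ∈ F.carrier)
    (hpF_total : F.carrier
      = cspan {z : Bd2 KB KF | ∃ v ∈ I, ∃ w ∈ E.carrier, z = pF v w})
    -- `F ⊗ H = (I ⊗ H) ⊗_{π⊗ι} (E ⊗ H)` and its pairing
    (KFH : HilbSpace) (τF : HTensor KF P.H KFH)
    (pFH : Bd2 KNH KIH → Bd2 β.KH KEH → Bd2 β.KH KFH)
    (hpFH_inner : ∀ (V' V'' : Bd2 KNH KIH) (W' W'' : Bd2 β.KH KEH),
      (adjoint (pFH V' W')).comp (pFH V'' W'')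
        = (adjoint W').comp ((πExt ((adjoint V').comp V'')).comp W''))
    (vAmp : Bd2 KN KI → Bd2 KNH KIH)
    (hvAmp : ∀ (v : Bd2 KN KI) (k : KN.carrier) (h : P.H.carrier),
      vAmp v (τN.tmul k h) = τI.tmul (v k) h)
    (wAmp : Bd2 KB KE → Bd2 β.KH KEH)
    (hwAmp : ∀ (w : Bd2 KB KE) (k : KB.carrier) (h : P.H.carrier),
      wAmp w (β.τK.tmul k h) = τE2.tmul (w k) h)
    (uAmp : Bd2 KB KF → Bd2 β.KH KFH)
    (huAmp : ∀ (u : Bd2 KB KF) (k : KB.carrier) (h : P.H.carrier),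
      uAmp u (β.τK.tmul k h) = τF.tmul (u k) h)
    (hpFH_amp : ∀ v ∈ I, ∀ w ∈ E.carrier, pFH (vAmp v) (wAmp w) = uAmp (pF v w)) :
    -- the unique product coaction `γ_F` on `F = I ⊗_π E`
    ∃ γF : Bd2 KB KF → Bd2 β.KH KFH,
      ((∀ u ∈ F.carrier, ∀ b ∈ B.carrier, γF (u.comp b) = (γF u).comp (β.app b)) ∧
       (∀ u ∈ F.carrier, ∀ u' ∈ F.carrier,
         (adjoint (γF u)).comp (γF u') = β.app ((adjoint u).comp u')) ∧
       (∀ v ∈ I, ∀ w ∈ E.carrier, ∀ x ∈ ctensor β.τK B.carrier (compacts P.H),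
         (γF (pF v w)).comp x = (pFH (αI v) (βE w)).comp x)) ∧
      ∀ γ' : Bd2 KB KF → Bd2 β.KH KFH,
        ((∀ u ∈ F.carrier, ∀ b ∈ B.carrier, γ' (u.comp b) = (γ' u).comp (β.app b)) ∧
         (∀ u ∈ F.carrier, ∀ u' ∈ F.carrier,
           (adjoint (γ' u)).comp (γ' u') = β.app ((adjoint u).comp u')) ∧
         (∀ v ∈ I, ∀ w ∈ E.carrier, ∀ x ∈ ctensor β.τK B.carrier (compacts P.H),
           (γ' (pF v w)).comp x = (pFH (αI v) (βE w)).comp x)) →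
        ∀ u ∈ F.carrier, γ' u = γF u := by

  classical
  -- `β.app` is an honest *-homomorphism on `B.carrier`
  have hBmult : ∀ b ∈ B.carrier, b ∈ multSet B.carrier := fun b hb s hs =>
    ⟨B.mul_mem b hb s hs, B.mul_mem s hs b hb⟩
  obtain ⟨happadd', happsmul', happmul', happstar'⟩ := β.app_hom
  have happadd : ∀ x ∈ B.carrier, ∀ y ∈ B.carrier, β.app (x + y) = β.app x + β.app y :=
    fun x hx y hy => happadd' x (hBmult x hx) y (hBmult y hy)
  have happsmul : ∀ (c : ℂ), ∀ x ∈ B.carrier, β.app (c • x) = c • β.app x :=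
    fun c x hx => happsmul' c x (hBmult x hx)
  have happstar : ∀ x ∈ B.carrier, β.app (star x) = star (β.app x) :=
    fun x hx => happstar' x (hBmult x hx)
  have happ0 : β.app 0 = 0 := by
    have := happsmul 0 0 B.zero_mem
    simpa using this
  have hcontract : ∀ b ∈ B.carrier, ‖β.app b‖ ≤ ‖b‖ :=
    aux_contract B.carrier B.zero_mem B.add_mem B.smul_mem B.mul_mem B.star_mem B.isClosed
      β.app happadd happsmul (fun x hx y hy => happmul' x (hBmult x hx) y (hBmult y hy)) happstar
  have hBsubmem : ∀ x ∈ B.carrier, ∀ y ∈ B.carrier, x - y ∈ B.carrier := by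
    intro x hx y hy
    have h := B.add_mem x hx _ (B.smul_mem (-1) y hy)
    rw [neg_one_smul, ← sub_eq_add_neg] at h
    exact h
  have happsub : ∀ x ∈ B.carrier, ∀ y ∈ B.carrier, β.app (x - y) = β.app x - β.app y := by
    intro x hx y hy
    have h1 := happadd _ (hBsubmem x hx y hy) _ hy
    rw [sub_add_cancel] at h1
    rw [eq_sub_iff_add_eq, ← h1]
  -- `π` and the covariance relation
  have hπmem : ∀ n ∈ N, ∀ w ∈ E.carrier, (π n).comp w ∈ E.carrier :=
    fun n hn w hw => (hπ_ops n hn).1 w hw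
  have hcov' : ∀ n ∈ N, ∀ w' ∈ E.carrier, (πExt (αN n)).comp (βE w') = βE ((π n).comp w') := by
    intro n hn w' hw'
    have h1 := hbLE (π n) w' hw' (1 : Bd β.KH)
    rw [hcovariant n hn]
    simpa [ContinuousLinearMap.one_def] using h1
  -- the key inner-product identity on generators
  have hKeyGen : ∀ v ∈ I, ∀ w ∈ E.carrier, ∀ v' ∈ I, ∀ w' ∈ E.carrier,
      (adjoint (pFH (αI v) (βE w))).comp (pFH (αI v') (βE w'))
        = β.app ((adjoint (pF v w)).comp (pF v' w')) ∧
      (adjoint (pF v w)).comp (pF v' w') ∈ B.carrier := by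
    intro v hv w hw v' hv' w' hw'
    have hn : (adjoint v).comp v' ∈ N := hI_inner v hv v' hv'
    refine ⟨?_, ?_⟩
    · rw [hpFH_inner, hαI_inner v hv v' hv', hcov' _ hn w' hw',
        hβE_inner w hw _ (hπmem _ hn w' hw'), hpF_inner v hv v' hv' w hw w' hw']
    · rw [hpF_inner v hv v' hv' w hw w' hw']
      exact E.inner_mem w hw _ (hπmem _ hn w' hw')
  have adjX : ∀ a₁ b₁ : Bd2 KB KF, adjoint (a₁ - b₁) = adjoint a₁ - adjoint b₁ :=
    fun a₁ b₁ => map_sub _ a₁ b₁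
  have adjY : ∀ a₁ b₁ : Bd2 β.KH KFH, adjoint (a₁ - b₁) = adjoint a₁ - adjoint b₁ :=
    fun a₁ b₁ => map_sub _ a₁ b₁
  -- generator-level compatibility with the right `B`-action
  have hgenH : ∀ (V : Bd2 KNH KIH) (W : Bd2 β.KH KEH) (x : Bd β.KH),
      pFH V (W.comp x) = (pFH V W).comp x := by
    intro V W x
    have e1 : (adjoint (pFH V (W.comp x))).comp (pFH V (W.comp x))
        = (adjoint x).comp ((adjoint W).comp ((πExt ((adjoint V).comp V)).comp (W.comp x))) := by
      conv_lhs => rw [hpFH_inner, adjoint_comp]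
      all_goals simp only [ContinuousLinearMap.comp_assoc]
    have e2 : (adjoint (pFH V (W.comp x))).comp ((pFH V W).comp x)
        = (adjoint x).comp ((adjoint W).comp ((πExt ((adjoint V).comp V)).comp (W.comp x))) := by
      conv_lhs => rw [← ContinuousLinearMap.comp_assoc, hpFH_inner, adjoint_comp]
      all_goals simp only [ContinuousLinearMap.comp_assoc]
    have e3 : (adjoint ((pFH V W).comp x)).comp (pFH V (W.comp x))
        = (adjoint x).comp ((adjoint W).comp ((πExt ((adjoint V).comp V)).comp (W.comp x))) := by
      conv_lhs => rw [adjoint_comp, ContinuousLinearMap.comp_assoc, hpFH_inner]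
      all_goals simp only [ContinuousLinearMap.comp_assoc]
    have e4 : (adjoint ((pFH V W).comp x)).comp ((pFH V W).comp x)
        = (adjoint x).comp ((adjoint W).comp ((πExt ((adjoint V).comp V)).comp (W.comp x))) := by
      conv_lhs => rw [adjoint_comp, ContinuousLinearMap.comp_assoc,
        ← ContinuousLinearMap.comp_assoc (adjoint (pFH V W)) (pFH V W) x, hpFH_inner]
      all_goals simp only [ContinuousLinearMap.comp_assoc]
    have hdd : (adjoint (pFH V (W.comp x) - (pFH V W).comp x)).comp
        (pFH V (W.comp x) - (pFH V W).comp x) = 0 := by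
      rw [adjY, ContinuousLinearMap.sub_comp, ContinuousLinearMap.comp_sub,
        ContinuousLinearMap.comp_sub, e1, e2, e3, e4]
      abel
    exact sub_eq_zero.mp (aux_eq_of_adjoint_comp _ hdd)
  have hgenF : ∀ v ∈ I, ∀ w ∈ E.carrier, ∀ b ∈ B.carrier,
      (pF v w).comp b = pF v (w.comp b) := by
    intro v hv w hw b hb
    have hwb : w.comp b ∈ E.carrier := E.smulB_mem w hw b hb
    have e1 : (adjoint ((pF v w).comp b)).comp ((pF v w).comp b)
        = (adjoint b).comp ((adjoint w).comp
            ((π ((adjoint v).comp v)).comp (w.comp b))) := by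
      conv_lhs => rw [adjoint_comp, ContinuousLinearMap.comp_assoc,
        ← ContinuousLinearMap.comp_assoc (adjoint (pF v w)) (pF v w) b,
        hpF_inner v hv v hv w hw w hw]
      all_goals simp only [ContinuousLinearMap.comp_assoc]
    have e2 : (adjoint ((pF v w).comp b)).comp (pF v (w.comp b))
        = (adjoint b).comp ((adjoint w).comp
            ((π ((adjoint v).comp v)).comp (w.comp b))) := by
      conv_lhs => rw [adjoint_comp, ContinuousLinearMap.comp_assoc,
        hpF_inner v hv v hv w hw _ hwb]
      all_goals simp only [ContinuousLinearMap.comp_assoc]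
    have e3 : (adjoint (pF v (w.comp b))).comp ((pF v w).comp b)
        = (adjoint b).comp ((adjoint w).comp
            ((π ((adjoint v).comp v)).comp (w.comp b))) := by
      conv_lhs => rw [← ContinuousLinearMap.comp_assoc, hpF_inner v hv v hv _ hwb w hw,
        adjoint_comp]
      all_goals simp only [ContinuousLinearMap.comp_assoc]
    have e4 : (adjoint (pF v (w.comp b))).comp (pF v (w.comp b))
        = (adjoint b).comp ((adjoint w).comp
            ((π ((adjoint v).comp v)).comp (w.comp b))) := by
      conv_lhs => rw [hpF_inner v hv v hv _ hwb _ hwb, adjoint_comp]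
      all_goals simp only [ContinuousLinearMap.comp_assoc]
    have hdd : (adjoint ((pF v w).comp b - pF v (w.comp b))).comp
        ((pF v w).comp b - pF v (w.comp b)) = 0 := by
      rw [adjX, ContinuousLinearMap.sub_comp, ContinuousLinearMap.comp_sub,
        ContinuousLinearMap.comp_sub, e1, e2, e3, e4]
      abel
    exact sub_eq_zero.mp (aux_eq_of_adjoint_comp _ hdd)
  have hqcomp : ∀ v ∈ I, ∀ w ∈ E.carrier, ∀ b ∈ B.carrier,
      pFH (αI v) (βE (w.comp b)) = (pFH (αI v) (βE w)).comp (β.app b) := by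
    intro v hv w hw b hb
    rw [hβE_mod w hw b hb, hgenH]
  -- the representation relation for the algebraic interior tensor product
  let Pt : Bd2 KN KI × Bd2 KB KE → Prop := fun t => t.1 ∈ I ∧ t.2 ∈ E.carrier
  let gt : Bd2 KN KI × Bd2 KB KE → Bd2 KB KF := fun t => pF t.1 t.2
  let qt : Bd2 KN KI × Bd2 KB KE → Bd2 β.KH KFH := fun t => pFH (αI t.1) (βE t.2)
  let Rep : Bd2 KB KF → Bd2 β.KH KFH → Prop := auxRep Pt gt qt
  have hRepInner : ∀ z y z' y', Rep z y → Rep z' y' →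
      (adjoint y).comp y' = β.app ((adjoint z).comp z') ∧
        (adjoint z).comp z' ∈ B.carrier := by
    rintro z y z' y' ⟨l, hl, rfl, rfl⟩ ⟨l', hl', rfl, rfl⟩
    exact aux_bilinear Pt gt qt
      (fun a b => (adjoint a).comp b) (fun a b => (adjoint a).comp b) β.app B.carrier
      (fun a a' b => by
        show (adjoint (a + a')).comp b = (adjoint a).comp b + (adjoint a').comp b
        rw [map_add ContinuousLinearMap.adjoint a a', ContinuousLinearMap.add_comp])
      (fun a b b' => by
        show (adjoint a).comp (b + b') = (adjoint a).comp b + (adjoint a).comp b'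
        rw [ContinuousLinearMap.comp_add])
      (fun c a b => by
        show (adjoint (c • a)).comp b = (starRingEnd ℂ) c • ((adjoint a).comp b)
        rw [map_smulₛₗ ContinuousLinearMap.adjoint c a, ContinuousLinearMap.smul_comp])
      (fun c a b => by
        show (adjoint a).comp (c • b) = c • ((adjoint a).comp b)
        rw [ContinuousLinearMap.comp_smul])
      (fun a a' b => by
        show (adjoint (a + a')).comp b = (adjoint a).comp b + (adjoint a').comp b
        rw [map_add ContinuousLinearMap.adjoint a a', ContinuousLinearMap.add_comp])
      (fun a b b' => by
        show (adjoint a).comp (b + b') = (adjoint a).comp b + (adjoint a).comp b'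
        rw [ContinuousLinearMap.comp_add])
      (fun c a b => by
        show (adjoint (c • a)).comp b = (starRingEnd ℂ) c • ((adjoint a).comp b)
        rw [map_smulₛₗ ContinuousLinearMap.adjoint c a, ContinuousLinearMap.smul_comp])
      (fun c a b => by
        show (adjoint a).comp (c • b) = c • ((adjoint a).comp b)
        rw [ContinuousLinearMap.comp_smul])
      B.zero_mem B.add_mem B.smul_mem happ0 happadd happsmul
      (fun t t' ht ht' => hKeyGen t.1 ht.1 t.2 ht.2 t'.1 ht'.1 t'.2 ht'.2)
      l l' hl hl'
  have hRepNorm : ∀ z y z' y', Rep z y → Rep z' y' → ‖y - y'‖ ≤ ‖z - z'‖ := by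
    intro z y z' y' h h'
    have hdiff : Rep (z + (-1 : ℂ) • z') (y + (-1 : ℂ) • y') :=
      auxRep_add Pt gt qt h (auxRep_smul Pt gt qt (-1) h')
    have e1 : z + (-1 : ℂ) • z' = z - z' := by rw [neg_one_smul, ← sub_eq_add_neg]
    have e2 : y + (-1 : ℂ) • y' = y - y' := by rw [neg_one_smul, ← sub_eq_add_neg]
    rw [e1, e2] at hdiff
    obtain ⟨heq, hmem⟩ := hRepInner _ _ _ _ hdiff hdiff
    have h1 := ContinuousLinearMap.norm_adjoint_comp_self (y - y')
    rw [show adjoint (y - y') ∘L (y - y') = β.app ((adjoint (z - z')).comp (z - z'))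
      from heq] at h1
    have h2 : ‖β.app ((adjoint (z - z')).comp (z - z'))‖
        ≤ ‖(adjoint (z - z')).comp (z - z')‖ := hcontract _ hmem
    have h3 := ContinuousLinearMap.norm_adjoint_comp_self (z - z')
    nlinarith [norm_nonneg (y - y'), norm_nonneg (z - z'),
      sq_nonneg (‖y - y'‖ - ‖z - z'‖), sq_nonneg (‖y - y'‖ + ‖z - z'‖)]
  -- density of representable elements in `F`
  have hFc : F.carrier = closure
      ((Submodule.span ℂ {z : Bd2 KB KF | ∃ v ∈ I, ∃ w ∈ E.carrier, z = pF v w} :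
        Submodule ℂ (Bd2 KB KF)) : Set (Bd2 KB KF)) := hpF_total
  have hsum_span : ∀ l : List (ℂ × (Bd2 KN KI × Bd2 KB KE)), (∀ t ∈ l, Pt t.2) →
      auxSum gt l ∈ Submodule.span ℂ
        {z : Bd2 KB KF | ∃ v ∈ I, ∃ w ∈ E.carrier, z = pF v w} := by
    intro l
    induction l with
    | nil => intro _; rw [auxSum_nil]; exact Submodule.zero_mem _
    | cons t l ih =>
      intro hl
      rw [auxSum_cons]
      have ht := hl t (by simp)
      exact Submodule.add_mem _
        (Submodule.smul_mem _ _ (Submodule.subset_span ⟨t.2.1, ht.1, t.2.2, ht.2, rfl⟩))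
        (ih fun s hs => hl s (List.mem_cons_of_mem _ hs))
  have hmemF : ∀ z y, Rep z y → z ∈ F.carrier := by
    rintro z y ⟨l, hl, rfl, -⟩
    rw [hFc]
    exact subset_closure (hsum_span l hl)
  have hspanRep : ∀ z ∈ Submodule.span ℂ
      {z : Bd2 KB KF | ∃ v ∈ I, ∃ w ∈ E.carrier, z = pF v w}, ∃ y, Rep z y := by
    intro z hz
    induction hz using Submodule.span_induction with
    | mem x hx =>
      obtain ⟨v, hv, w, hw, rfl⟩ := hx
      exact ⟨_, auxRep_single Pt gt qt (v, w) ⟨hv, hw⟩⟩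
    | zero => exact ⟨0, auxRep_zero Pt gt qt⟩
    | add x y hx hy ihx ihy =>
      obtain ⟨a, ha⟩ := ihx
      obtain ⟨b, hb⟩ := ihy
      exact ⟨a + b, auxRep_add Pt gt qt ha hb⟩
    | smul c x hx ihx =>
      obtain ⟨a, ha⟩ := ihx
      exact ⟨c • a, auxRep_smul Pt gt qt c ha⟩
  have hdense : ∀ u ∈ F.carrier, ∀ ε : ℝ, 0 < ε → ∃ z y, Rep z y ∧ ‖u - z‖ < ε := by
    intro u hu ε hε
    rw [hFc] at hu
    obtain ⟨z, hzs, hdist⟩ := Metric.mem_closure_iff.mp hu ε hε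
    obtain ⟨y, hy⟩ := hspanRep z hzs
    exact ⟨z, y, hy, by rwa [dist_eq_norm] at hdist⟩
  -- construction of `γF` by continuous extension
  have hEx : ∀ u ∈ F.carrier, ∃ Yv : Bd2 β.KH KFH, ∀ z y, Rep z y → ‖Yv - y‖ ≤ ‖u - z‖ := by
    intro u hu
    have hseq : ∀ n : ℕ, ∃ z y, Rep z y ∧ ‖u - z‖ < 1 / (n + 1 : ℝ) := by
      intro n; exact hdense u hu _ (by positivity)
    choose zs ys hrep hlt using hseq
    have hz0 : Filter.Tendsto (fun n : ℕ => ‖u - zs n‖) Filter.atTop (nhds 0) :=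
      squeeze_zero (fun n => norm_nonneg _) (fun n => (hlt n).le)
        tendsto_one_div_add_atTop_nhds_zero_nat
    have hcauchy : CauchySeq ys := by
      rw [Metric.cauchySeq_iff]
      intro ε hε
      obtain ⟨Nn, hN⟩ := exists_nat_one_div_lt (show (0 : ℝ) < ε / 2 by positivity)
      refine ⟨Nn, fun m hm n hn => ?_⟩
      have hb : ∀ k, Nn ≤ k → ‖u - zs k‖ < ε / 2 := by
        intro k hk
        have h1 : (1 : ℝ) / (k + 1) ≤ 1 / (Nn + 1) := by
          apply one_div_le_one_div_of_le (by positivity)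
          have : (Nn : ℝ) ≤ k := by exact_mod_cast hk
          linarith
        exact lt_of_lt_of_le (hlt k) (h1.trans hN.le)
      have h2 : dist (ys m) (ys n) ≤ ‖u - zs m‖ + ‖u - zs n‖ := by
        rw [dist_eq_norm]
        have h3 := hRepNorm _ _ _ _ (hrep m) (hrep n)
        have h4 : ‖zs m - zs n‖ ≤ ‖u - zs m‖ + ‖u - zs n‖ := by
          have he : zs m - zs n = -(u - zs m) + (u - zs n) := by abel
          rw [he]
          exact (norm_add_le _ _).trans (by rw [norm_neg])
        exact h3.trans h4
      have := add_lt_add (hb m hm) (hb n hn)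
      rw [add_halves] at this
      exact lt_of_le_of_lt h2 this
    obtain ⟨Yv, hYv⟩ := cauchySeq_tendsto_of_complete hcauchy
    refine ⟨Yv, fun z y hzy => ?_⟩
    have hbound : ∀ n, ‖ys n - y‖ ≤ ‖u - z‖ + ‖u - zs n‖ := by
      intro n
      have h3 := hRepNorm _ _ _ _ (hrep n) hzy
      have h4 : ‖zs n - z‖ ≤ ‖u - z‖ + ‖u - zs n‖ := by
        have he : zs n - z = -(u - zs n) + (u - z) := by abel
        rw [he]
        refine (norm_add_le _ _).trans ?_
        rw [norm_neg]
        linarith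
      exact h3.trans h4
    have h1 : Filter.Tendsto (fun n => ‖ys n - y‖) Filter.atTop (nhds ‖Yv - y‖) :=
      (hYv.sub tendsto_const_nhds).norm
    have h2 : Filter.Tendsto (fun n => ‖u - z‖ + ‖u - zs n‖) Filter.atTop
        (nhds (‖u - z‖ + 0)) := tendsto_const_nhds.add hz0
    have := le_of_tendsto_of_tendsto' h1 h2 hbound
    simpa using this
  choose γF0 hγF0 using hEx
  let γF : Bd2 KB KF → Bd2 β.KH KFH := fun u => if h : u ∈ F.carrier then γF0 u h else 0
  have hγF : ∀ u (hu : u ∈ F.carrier), ∀ z y, Rep z y → ‖γF u - y‖ ≤ ‖u - z‖ := by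
    intro u hu z y h
    have he : γF u = γF0 u hu := dif_pos hu
    rw [he]
    exact hγF0 u hu z y h
  have hγFrep : ∀ z y, Rep z y → γF z = y := by
    intro z y h
    have h1 := hγF z (hmemF z y h) z y h
    rw [sub_self, norm_zero] at h1
    exact sub_eq_zero.mp (norm_le_zero_iff.mp h1)
  have hγFnorm : ∀ u, u ∈ F.carrier → ‖γF u‖ ≤ ‖u‖ := by
    intro u hu
    have := hγF u hu 0 0 (auxRep_zero Pt gt qt)
    simpa using this
  -- compatibility with inner products
  have hcond2 : ∀ u ∈ F.carrier, ∀ u' ∈ F.carrier,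
      (adjoint (γF u)).comp (γF u') = β.app ((adjoint u).comp u') := by
    intro u hu u' hu'
    have hmemB : (adjoint u).comp u' ∈ B.carrier := F.inner_mem u hu u' hu'
    refine sub_eq_zero.mp (aux_norm_le_zero _ (2 * ‖u‖ + 2 * ‖u'‖ + 6) ?_)
    intro ε hε hε1
    obtain ⟨z, y, hzy, hz⟩ := hdense u hu ε hε
    obtain ⟨z', y', hzy', hz'⟩ := hdense u' hu' ε hε
    obtain ⟨heq, hmem⟩ := hRepInner _ _ _ _ hzy hzy'
    have n1 : ‖γF u - y‖ ≤ ε := (hγF u hu z y hzy).trans hz.le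
    have n2 : ‖γF u' - y'‖ ≤ ε := (hγF u' hu' z' y' hzy').trans hz'.le
    have n3 : ‖γF u'‖ ≤ ‖u'‖ := hγFnorm u' hu'
    have n4 : ‖y‖ ≤ ‖u‖ + ε := by
      have he : y = γF u - (γF u - y) := by abel
      calc ‖y‖ = ‖γF u - (γF u - y)‖ := by rw [← he]
        _ ≤ ‖γF u‖ + ‖γF u - y‖ := norm_sub_le _ _
        _ ≤ ‖u‖ + ε := add_le_add (hγFnorm u hu) n1
    have n5 : ‖z'‖ ≤ ‖u'‖ + ε := by
      have he : z' = u' - (u' - z') := by abel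
      calc ‖z'‖ = ‖u' - (u' - z')‖ := by rw [← he]
        _ ≤ ‖u'‖ + ‖u' - z'‖ := norm_sub_le _ _
        _ ≤ ‖u'‖ + ε := add_le_add le_rfl hz'.le
    have d1 : (adjoint (γF u)).comp (γF u') - (adjoint y).comp y'
        = (adjoint (γF u - y)).comp (γF u') + (adjoint y).comp (γF u' - y') := by
      rw [adjY, ContinuousLinearMap.sub_comp, ContinuousLinearMap.comp_sub]
      abel
    have b1 : ‖(adjoint (γF u)).comp (γF u') - (adjoint y).comp y'‖
        ≤ ε * ‖u'‖ + (‖u‖ + ε) * ε := by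
      rw [d1]
      refine (norm_add_le _ _).trans (add_le_add ?_ ?_)
      · refine (ContinuousLinearMap.opNorm_comp_le _ _).trans ?_
        rw [LinearIsometryEquiv.norm_map]
        exact mul_le_mul n1 n3 (norm_nonneg _) hε.le
      · refine (ContinuousLinearMap.opNorm_comp_le _ _).trans ?_
        rw [LinearIsometryEquiv.norm_map]
        exact mul_le_mul n4 n2 (norm_nonneg _) (by positivity)
    have b2 : ‖(adjoint z).comp z' - (adjoint u).comp u'‖
        ≤ ε * (‖u'‖ + ε) + ‖u‖ * ε := by
      have d3 : (adjoint z).comp z' - (adjoint u).comp u'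
          = (adjoint (z - u)).comp z' + (adjoint u).comp (z' - u') := by
        rw [adjX, ContinuousLinearMap.sub_comp, ContinuousLinearMap.comp_sub]
        abel
      rw [d3]
      refine (norm_add_le _ _).trans (add_le_add ?_ ?_)
      · refine (ContinuousLinearMap.opNorm_comp_le _ _).trans ?_
        rw [LinearIsometryEquiv.norm_map]
        refine mul_le_mul ?_ n5 (norm_nonneg _) hε.le
        rw [norm_sub_rev]
        exact hz.le
      · refine (ContinuousLinearMap.opNorm_comp_le _ _).trans ?_
        rw [LinearIsometryEquiv.norm_map]
        refine mul_le_mul le_rfl ?_ (norm_nonneg _) (norm_nonneg _)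
        rw [norm_sub_rev]
        exact hz'.le
    have split : (adjoint (γF u)).comp (γF u') - β.app ((adjoint u).comp u')
        = ((adjoint (γF u)).comp (γF u') - (adjoint y).comp y')
          + (β.app ((adjoint z).comp z') - β.app ((adjoint u).comp u')) := by
      rw [heq]
      abel
    rw [split]
    refine (norm_add_le _ _).trans ?_
    have b3 : ‖β.app ((adjoint z).comp z') - β.app ((adjoint u).comp u')‖
        ≤ ε * (‖u'‖ + ε) + ‖u‖ * ε := by
      rw [← happsub _ hmem _ hmemB]
      exact (hcontract _ (hBsubmem _ hmem _ hmemB)).trans b2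
    nlinarith [norm_nonneg u, norm_nonneg u']
  -- compatibility with the `B`-action
  have hRepComp : ∀ b ∈ B.carrier, ∀ z y, Rep z y → Rep (z.comp b) (y.comp (β.app b)) := by
    intro b hb z y h
    refine auxRep_map Pt gt qt Pt gt qt (fun t => (t.1, t.2.comp b))
      (fun x => x.comp b) (fun yy => yy.comp (β.app b))
      (fun a a' => ContinuousLinearMap.add_comp a a' b)
      (fun c a => ContinuousLinearMap.smul_comp c a b)
      (ContinuousLinearMap.zero_comp b)
      (fun a a' => ContinuousLinearMap.add_comp a a' (β.app b))
      (fun c a => ContinuousLinearMap.smul_comp c a (β.app b))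
      (ContinuousLinearMap.zero_comp (β.app b))
      ?_ h
    intro t ht
    exact ⟨⟨ht.1, E.smulB_mem t.2 ht.2 b hb⟩, (hgenF t.1 ht.1 t.2 ht.2 b hb).symm,
      hqcomp t.1 ht.1 t.2 ht.2 b hb⟩
  have hcond1 : ∀ u ∈ F.carrier, ∀ b ∈ B.carrier,
      γF (u.comp b) = (γF u).comp (β.app b) := by
    intro u hu b hb
    have hub : u.comp b ∈ F.carrier := F.smulB_mem u hu b hb
    refine sub_eq_zero.mp (aux_norm_le_zero _ (‖b‖ + ‖β.app b‖) ?_)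
    intro ε hε hε1
    obtain ⟨z, y, hzy, hz⟩ := hdense u hu ε hε
    have h1 : ‖γF (u.comp b) - y.comp (β.app b)‖ ≤ ‖u.comp b - z.comp b‖ :=
      hγF _ hub _ _ (hRepComp b hb z y hzy)
    have h2 : ‖u.comp b - z.comp b‖ ≤ ε * ‖b‖ := by
      rw [← ContinuousLinearMap.sub_comp]
      exact (ContinuousLinearMap.opNorm_comp_le _ _).trans
        (mul_le_mul hz.le le_rfl (norm_nonneg _) hε.le)
    have h3 : ‖y.comp (β.app b) - (γF u).comp (β.app b)‖ ≤ ε * ‖β.app b‖ := by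
      rw [← ContinuousLinearMap.sub_comp]
      refine (ContinuousLinearMap.opNorm_comp_le _ _).trans ?_
      refine mul_le_mul ?_ le_rfl (norm_nonneg _) hε.le
      rw [norm_sub_rev]
      exact (hγF u hu z y hzy).trans hz.le
    have split : γF (u.comp b) - (γF u).comp (β.app b)
        = (γF (u.comp b) - y.comp (β.app b))
          + (y.comp (β.app b) - (γF u).comp (β.app b)) := by abel
    rw [split]
    refine (norm_add_le _ _).trans ?_
    have h4 := h1.trans h2
    have h5 : ε * ‖b‖ + ε * ‖β.app b‖ = ε * (‖b‖ + ‖β.app b‖) := by ring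
    linarith
  have hcond3 : ∀ v ∈ I, ∀ w ∈ E.carrier, γF (pF v w) = pFH (αI v) (βE w) := by
    intro v hv w hw
    exact hγFrep _ _ (auxRep_single Pt gt qt (v, w) ⟨hv, hw⟩)
  refine ⟨γF, ⟨hcond1, fun u hu u' hu' => hcond2 u hu u' hu', ?_⟩, ?_⟩
  · intro v hv w hw x hx
    rw [hcond3 v hv w hw]
  -- uniqueness
  rintro γ' ⟨hc1, hc2, hc3⟩ u hu
  have hgen' : ∀ v ∈ I, ∀ w ∈ E.carrier, γ' (pF v w) = pFH (αI v) (βE w) := by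
    intro v hv w hw
    have hvan : ∀ b ∈ B.carrier, ∀ k ∈ compacts P.toMUData.H,
        (γ' (pF v w) - pFH (αI v) (βE w)).comp (β.τK.opT b k) = 0 := by
      intro b hb k hk
      have hmemx : β.τK.opT b k ∈ ctensor β.τK B.carrier (compacts P.toMUData.H) :=
        subset_closure (Submodule.subset_span ⟨b, hb, k, hk, rfl⟩)
      have h1 := hc3 v hv w hw _ hmemx
      rw [ContinuousLinearMap.sub_comp, h1, sub_self]
    exact sub_eq_zero.mp (aux_vanish β.τK B _ hvan)
  have hγ'norm : ∀ x, x ∈ F.carrier → ‖γ' x‖ ≤ ‖x‖ := by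
    intro x hx
    have h1 := hc2 x hx x hx
    have h2 := ContinuousLinearMap.norm_adjoint_comp_self (γ' x)
    rw [show adjoint (γ' x) ∘L γ' x = β.app ((adjoint x).comp x) from h1] at h2
    have h3 := hcontract _ (F.inner_mem x hx x hx)
    have h4 := ContinuousLinearMap.norm_adjoint_comp_self x
    nlinarith [norm_nonneg (γ' x), norm_nonneg x,
      sq_nonneg (‖γ' x‖ - ‖x‖), sq_nonneg (‖γ' x‖ + ‖x‖)]
  have hmix : ∀ x, x ∈ F.carrier → ∀ z y, Rep z y →
      (adjoint (γ' x)).comp y = β.app ((adjoint x).comp z) := by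
    rintro x hx z y ⟨l, hl, rfl, rfl⟩
    refine (aux_onesided Pt gt qt (fun c => c)
      (fun yy => (adjoint (γ' x)).comp yy) (fun zz => (adjoint x).comp zz) β.app B.carrier
      (fun a b' => ContinuousLinearMap.comp_add _ a b')
      (fun c a => ContinuousLinearMap.comp_smul _ c a)
      (ContinuousLinearMap.comp_zero _)
      (fun a b' => ContinuousLinearMap.comp_add _ a b')
      (fun c a => ContinuousLinearMap.comp_smul _ c a)
      (ContinuousLinearMap.comp_zero _)
      B.zero_mem B.add_mem B.smul_mem happ0 happadd happsmul ?_ l hl).1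
    intro t ht
    constructor
    · rw [show qt t = γ' (gt t) from (hgen' t.1 ht.1 t.2 ht.2).symm]
      exact hc2 x hx (gt t) (hpF_mem t.1 ht.1 t.2 ht.2)
    · exact F.inner_mem x hx _ (hpF_mem t.1 ht.1 t.2 ht.2)
  have hq : (adjoint u).comp u ∈ B.carrier := F.inner_mem u hu u hu
  have hcross : (adjoint (γ' u)).comp (γF u) = β.app ((adjoint u).comp u) := by
    refine sub_eq_zero.mp (aux_norm_le_zero _ (2 * ‖u‖) ?_)
    intro ε hε hε1
    obtain ⟨z, y, hzy, hz⟩ := hdense u hu ε hε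
    have hzF : z ∈ F.carrier := hmemF z y hzy
    have split : (adjoint (γ' u)).comp (γF u) - β.app ((adjoint u).comp u)
        = (adjoint (γ' u)).comp (γF u - y)
          + (β.app ((adjoint u).comp z) - β.app ((adjoint u).comp u)) := by
      rw [ContinuousLinearMap.comp_sub, hmix u hu z y hzy]
      abel
    rw [split]
    refine (norm_add_le _ _).trans ?_
    have e1 : ‖(adjoint (γ' u)).comp (γF u - y)‖ ≤ ‖u‖ * ε := by
      refine (ContinuousLinearMap.opNorm_comp_le _ _).trans ?_
      rw [LinearIsometryEquiv.norm_map]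
      exact mul_le_mul (hγ'norm u hu) ((hγF u hu z y hzy).trans hz.le)
        (norm_nonneg _) (norm_nonneg _)
    have e2 : ‖β.app ((adjoint u).comp z) - β.app ((adjoint u).comp u)‖ ≤ ‖u‖ * ε := by
      rw [← happsub _ (F.inner_mem u hu z hzF) _ hq]
      refine (hcontract _ (hBsubmem _ (F.inner_mem u hu z hzF) _ hq)).trans ?_
      rw [← ContinuousLinearMap.comp_sub]
      refine (ContinuousLinearMap.opNorm_comp_le _ _).trans ?_
      rw [LinearIsometryEquiv.norm_map]
      refine mul_le_mul le_rfl ?_ (norm_nonneg _) (norm_nonneg _)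
      rw [norm_sub_rev]
      exact hz.le
    have h5 : ‖u‖ * ε + ‖u‖ * ε = ε * (2 * ‖u‖) := by ring
    linarith
  have hcross2 : (adjoint (γF u)).comp (γ' u) = β.app ((adjoint u).comp u) := by
    have h1 := congrArg adjoint hcross
    rw [adjoint_comp, adjoint_adjoint] at h1
    have hsa : star ((adjoint u).comp u) = (adjoint u).comp u := by
      rw [ContinuousLinearMap.star_eq_adjoint, adjoint_comp, adjoint_adjoint]
    have h2 := happstar _ hq
    rw [hsa] at h2
    rw [h1, ← ContinuousLinearMap.star_eq_adjoint]
    exact h2.symm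
  have hfin : (adjoint (γ' u - γF u)).comp (γ' u - γF u) = 0 := by
    rw [adjY, ContinuousLinearMap.sub_comp, ContinuousLinearMap.comp_sub,
      ContinuousLinearMap.comp_sub, hc2 u hu u hu, hcross, hcross2, hcond2 u hu u hu]
    abel
  exact sub_eq_zero.mp (aux_eq_of_adjoint_comp _ hfin)


end Statement18
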